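/- arXiv:1706.03866 — 5 statements merged into one kernel-verified Lean document; each statement's English description precedes it below -/
import Mathlib

section
/- Let P_{YZ|X} be a wiretap channel over finite sets X, Y, Z and let Q_{Y|Z} be an arbitrary stochastic kernel from Z to Y. Then every (M, ε, δ)_avg secrecy code for P_{YZ|X} satisfies, for every τ ∈ (0, 1−ε−δ), the inequality M · τ · β_{1−ε−δ−τ}( P_{XYZ}, P_{XZ}·Q_{Y|Z} ) ≤ τ + δ, where P_{XYZ} is the joint distribution on X × Y × Z induced by the code (marginalizing the message) and P_{XZ}·Q_{Y|Z} denotes the distribution (x,y,z) ↦ P_{XZ}(x,z)·Q_{Y|Z}(y|z). -/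
open Finset
open scoped Classical

noncomputable section

/-- Total variation distance between two finitely supported distributions. -/
def tv {A : Type*} [Fintype A] (P Q : A → ℝ) : ℝ := (1 / 2) * ∑ a, |P a - Q a|

/-- The Neyman–Pearson `β` function: the smallest value of `∑ Q·T` over randomized
tests `T : A → [0,1]` with `∑ P·T ≥ α`. -/
def betaNP {A : Type*} [Fintype A] (α : ℝ) (P Q : A → ℝ) : ℝ :=
  sInf {b : ℝ | ∃ T : A → ℝ, (∀ a, 0 ≤ T a) ∧ (∀ a, T a ≤ 1) ∧
    α ≤ ∑ a, P a * T a ∧ b = ∑ a, Q a * T a}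

lemma posPart_sum_eq_tv {A : Type*} [Fintype A] (P Q : A → ℝ)
    (hPQ : ∑ a, P a = ∑ a, Q a) :
    ∑ a, max (P a - Q a) 0 = tv P Q := by
  have key : ∀ a, max (P a - Q a) 0 = ((P a - Q a) + |P a - Q a|) / 2 := by
    intro a
    rcases le_total (P a - Q a) 0 with h | h
    · rw [max_eq_right h, abs_of_nonpos h]; ring
    · rw [max_eq_left h, abs_of_nonneg h]; ring
  have hz : ∑ a, (P a - Q a) = 0 := by
    rw [Finset.sum_sub_distrib, hPQ, sub_self]
  calc ∑ a, max (P a - Q a) 0 = ∑ a, ((P a - Q a) + |P a - Q a|) / 2 := by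
        simp only [key]
    _ = ((∑ a, (P a - Q a)) + ∑ a, |P a - Q a|) / 2 := by
        rw [← Finset.sum_add_distrib, Finset.sum_div]
    _ = tv P Q := by rw [hz]; unfold tv; ring

theorem wiretap_core
    {X Y Z : Type*} [Fintype X] [Fintype Y] [Fintype Z]
    (PYZX : X → Y × Z → ℝ)
    (hchpos : ∀ x q, 0 ≤ PYZX x q) (hchsum : ∀ x, ∑ q, PYZX x q = 1)
    (QYZ : Z → Y → ℝ)
    (hQpos : ∀ z y, 0 ≤ QYZ z y) (hQsum : ∀ z, ∑ y, QYZ z y = 1)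
    (M : ℕ) (hM : 0 < M)
    (f : Fin M → X → ℝ) (hf0 : ∀ m x, 0 ≤ f m x) (hfsum : ∑ m, ∑ x, f m x = 1)
    (dec : Y → Fin M) (ε δ : ℝ)
    (herr : ∑ m : Fin M, ∑ x, f m x *
        ∑ q ∈ univ.filter (fun q : Y × Z => dec q.1 ≠ m), PYZX x q ≤ ε)
    (hsec : tv (fun p : Fin M × Z => ∑ x, f p.1 x * ∑ y, PYZX x (y, p.2))
        (fun p : Fin M × Z => (M : ℝ)⁻¹ *
          ∑ m : Fin M, ∑ x, f m x * ∑ y, PYZX x (y, p.2)) ≤ δ)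
    (τ : ℝ) (hτ0 : 0 < τ) :
    (M : ℝ) * τ * betaNP (1 - ε - δ - τ)
        (fun t : X × Y × Z => ∑ m : Fin M, f m t.1 * PYZX t.1 t.2)
        (fun t : X × Y × Z =>
          (∑ m : Fin M, f m t.1 * ∑ y, PYZX t.1 (y, t.2.2)) * QYZ t.2.2 t.2.1)
      ≤ τ + δ := by
  classical
  have hM' : (0:ℝ) < (M:ℝ) := by exact_mod_cast hM
  have hMτ : (0:ℝ) < (M:ℝ) * τ := mul_pos hM' hτ0
  -- basic objects
  set g : X → Z → ℝ := fun x z => ∑ y, PYZX x (y, z) with hgdef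
  have hg0 : ∀ x z, 0 ≤ g x z := fun x z => Finset.sum_nonneg fun y _ => hchpos x (y, z)
  have hgsum : ∀ x, ∑ z, g x z = 1 := by
    intro x
    calc ∑ z, ∑ y, PYZX x (y, z) = ∑ y, ∑ z, PYZX x (y, z) := Finset.sum_comm
      _ = ∑ q : Y × Z, PYZX x q := (Fintype.sum_prod_type _).symm
      _ = 1 := hchsum x
  set PX : X → ℝ := fun x => ∑ m, f m x with hPXdef
  have hPX0 : ∀ x, 0 ≤ PX x := fun x => Finset.sum_nonneg fun m _ => hf0 m x
  have hfle : ∀ m x, f m x ≤ PX x := fun m x =>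
    Finset.single_le_sum (fun i _ => hf0 i x) (Finset.mem_univ m)
  have hfzero : ∀ m x, PX x = 0 → f m x = 0 := fun m x h =>
    le_antisymm (h ▸ hfle m x) (hf0 m x)
  set Pwz : Fin M → Z → ℝ := fun w z => ∑ x, f w x * g x z with hPwzdef
  have hPwz0 : ∀ w z, 0 ≤ Pwz w z :=
    fun w z => Finset.sum_nonneg fun x _ => mul_nonneg (hf0 w x) (hg0 x z)
  set PZ : Z → ℝ := fun z => ∑ m, Pwz m z with hPZdef
  have hPZ0 : ∀ z, 0 ≤ PZ z := fun z => Finset.sum_nonneg fun m _ => hPwz0 m z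
  have hrowsum : ∀ m : Fin M, ∑ z, Pwz m z = ∑ x, f m x := by
    intro m
    calc ∑ z, ∑ x, f m x * g x z = ∑ x, ∑ z, f m x * g x z := Finset.sum_comm
      _ = ∑ x, f m x * ∑ z, g x z := by simp only [← Finset.mul_sum]
      _ = ∑ x, f m x := by simp only [hgsum, mul_one]
  have hPZsum : ∑ z, PZ z = 1 := by
    calc ∑ z, ∑ m, Pwz m z = ∑ m, ∑ z, Pwz m z := Finset.sum_comm
      _ = ∑ m, ∑ x, f m x := by simp only [hrowsum]
      _ = 1 := hfsum
  set Qd : Fin M → Z → ℝ :=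
    fun w z => ∑ y ∈ univ.filter (fun y => dec y = w), QYZ z y with hQddef
  have hQd0 : ∀ w z, 0 ≤ Qd w z :=
    fun w z => Finset.sum_nonneg fun y _ => hQpos z y
  have hQdsum : ∀ z, ∑ w, Qd w z = 1 := by
    intro z
    calc ∑ w, ∑ y ∈ univ.filter (fun y => dec y = w), QYZ z y
        = ∑ y, QYZ z y := Finset.sum_fiberwise _ _ _
      _ = 1 := hQsum z
  -- the threshold and indicators
  set c : ℝ := ((M:ℝ) * τ)⁻¹ with hcdef
  have hc0 : 0 < c := inv_pos.2 hMτ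
  set ind : Fin M → Z → ℝ := fun w z => if Qd w z ≤ c then 1 else 0 with hinddef
  set jnd : Fin M → Z → ℝ := fun w z => if Qd w z ≤ c then 0 else 1 with hjnddef
  have hind0 : ∀ w z, 0 ≤ ind w z := by
    intro w z; simp only [hinddef]; split <;> norm_num
  have hind1 : ∀ w z, ind w z ≤ 1 := by
    intro w z; simp only [hinddef]; split <;> norm_num
  have hjnd0 : ∀ w z, 0 ≤ jnd w z := by
    intro w z; simp only [hjnddef]; split <;> norm_num
  have hij : ∀ w z, ind w z = 1 - jnd w z := by
    intro w z; simp only [hinddef, hjnddef]; split <;> norm_num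
  -- the test
  set T : X × Y × Z → ℝ := fun t =>
    (if PX t.1 = 0 then 0 else f (dec t.2.1) t.1 / PX t.1) * ind (dec t.2.1) t.2.2
    with hTdef
  have hT0 : ∀ t, 0 ≤ T t := by
    intro t
    refine mul_nonneg ?_ (hind0 _ _)
    split
    · exact le_refl 0
    · exact div_nonneg (hf0 _ _) (hPX0 _)
  have hT1 : ∀ t, T t ≤ 1 := by
    intro t
    have h1 : (if PX t.1 = 0 then 0 else f (dec t.2.1) t.1 / PX t.1) ≤ 1 := by
      split
      · norm_num
      · exact div_le_one_of_le₀ (hfle _ _) (hPX0 _)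
    calc T t ≤ 1 * 1 := mul_le_mul h1 (hind1 _ _) (hind0 _ _) (by norm_num)
      _ = 1 := by norm_num
  -- pointwise identities for P·T and Q·T
  have hPT : ∀ t : X × Y × Z, (∑ m, f m t.1 * PYZX t.1 t.2) * T t
      = f (dec t.2.1) t.1 * PYZX t.1 t.2 * ind (dec t.2.1) t.2.2 := by
    intro t
    have h1 : ∑ m, f m t.1 * PYZX t.1 t.2 = PX t.1 * PYZX t.1 t.2 :=
      (Finset.sum_mul _ _ _).symm
    rw [h1]
    show PX t.1 * PYZX t.1 t.2 *
      ((if PX t.1 = 0 then 0 else f (dec t.2.1) t.1 / PX t.1) * ind (dec t.2.1) t.2.2) = _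
    by_cases h : PX t.1 = 0
    · simp [h, hfzero _ _ h]
    · rw [if_neg h]; field_simp
  have hQT : ∀ t : X × Y × Z,
      ((∑ m, f m t.1 * g t.1 t.2.2) * QYZ t.2.2 t.2.1) * T t
      = f (dec t.2.1) t.1 * g t.1 t.2.2 * QYZ t.2.2 t.2.1 * ind (dec t.2.1) t.2.2 := by
    intro t
    have h1 : ∑ m, f m t.1 * g t.1 t.2.2 = PX t.1 * g t.1 t.2.2 :=
      (Finset.sum_mul _ _ _).symm
    rw [h1]
    show PX t.1 * g t.1 t.2.2 * QYZ t.2.2 t.2.1 *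
      ((if PX t.1 = 0 then 0 else f (dec t.2.1) t.1 / PX t.1) * ind (dec t.2.1) t.2.2) = _
    by_cases h : PX t.1 = 0
    · simp [h, hfzero _ _ h]
    · rw [if_neg h]; field_simp
  -- fiber decomposition helpers
  have fiberY : ∀ (F : Fin M → Y → ℝ), ∑ y, F (dec y) y
      = ∑ w, ∑ y ∈ univ.filter (fun y => dec y = w), F w y := by
    intro F
    rw [← Finset.sum_fiberwise univ dec (fun y => F (dec y) y)]
    exact Finset.sum_congr rfl fun w _ => Finset.sum_congr rfl
      fun y hy => by rw [(Finset.mem_filter.1 hy).2]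
  have fiberQ : ∀ (F : Fin M → Y × Z → ℝ), ∑ q : Y × Z, F (dec q.1) q
      = ∑ w, ∑ q ∈ univ.filter (fun q : Y × Z => dec q.1 = w), F w q := by
    intro F
    rw [← Finset.sum_fiberwise univ (fun q : Y × Z => dec q.1)
      (fun q => F (dec q.1) q)]
    exact Finset.sum_congr rfl fun w _ => Finset.sum_congr rfl
      fun q hq => by rw [(Finset.mem_filter.1 hq).2]
  -- the "max" sum is at most δ
  have hmaxsum : ∑ w, ∑ z, max (Pwz w z - (M:ℝ)⁻¹ * PZ z) 0 ≤ δ := by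
    have hsum1 : ∑ p : Fin M × Z, (∑ x, f p.1 x * ∑ y, PYZX x (y, p.2))
        = ∑ p : Fin M × Z, ((M:ℝ)⁻¹ * ∑ m : Fin M, ∑ x, f m x * ∑ y, PYZX x (y, p.2)) := by
      have l1 : ∑ p : Fin M × Z, (∑ x, f p.1 x * ∑ y, PYZX x (y, p.2)) = 1 := by
        rw [Fintype.sum_prod_type]
        show ∑ w, ∑ z, Pwz w z = 1
        calc ∑ w, ∑ z, Pwz w z = ∑ w, ∑ x, f w x := by simp only [hrowsum]
          _ = 1 := hfsum
      have l2 : ∑ p : Fin M × Z, ((M:ℝ)⁻¹ * ∑ m : Fin M, ∑ x, f m x * ∑ y, PYZX x (y, p.2))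
          = 1 := by
        rw [Fintype.sum_prod_type]
        show ∑ _w : Fin M, ∑ z, (M:ℝ)⁻¹ * PZ z = 1
        rw [Finset.sum_const]
        simp only [← Finset.mul_sum, hPZsum, mul_one, Finset.card_univ, Fintype.card_fin,
          nsmul_eq_mul]
        exact mul_inv_cancel₀ (ne_of_gt hM')
      rw [l1, l2]
    have htv := posPart_sum_eq_tv
      (fun p : Fin M × Z => ∑ x, f p.1 x * ∑ y, PYZX x (y, p.2))
      (fun p : Fin M × Z => (M:ℝ)⁻¹ * ∑ m : Fin M, ∑ x, f m x * ∑ y, PYZX x (y, p.2))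
      hsum1
    have heq : ∑ w, ∑ z, max (Pwz w z - (M:ℝ)⁻¹ * PZ z) 0
        = ∑ p : Fin M × Z, max ((∑ x, f p.1 x * ∑ y, PYZX x (y, p.2))
            - (M:ℝ)⁻¹ * ∑ m : Fin M, ∑ x, f m x * ∑ y, PYZX x (y, p.2)) 0 := by
      rw [Fintype.sum_prod_type]
    rw [heq, htv]
    exact hsec
  -- ========== P side ==========
  set E : Fin M → X → ℝ :=
    fun w x => ∑ q ∈ univ.filter (fun q : Y × Z => dec q.1 ≠ w), PYZX x q with hEdef
  have herr' : ∑ m, ∑ x, f m x * E m x ≤ ε := herr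
  have hA : 1 - ε ≤ ∑ x, ∑ q : Y × Z, f (dec q.1) x * PYZX x q := by
    have hx : ∀ x, ∑ q : Y × Z, f (dec q.1) x * PYZX x q
        = ∑ w, f w x * (1 - E w x) := by
      intro x
      rw [fiberQ (fun w q => f w x * PYZX x q)]
      refine Finset.sum_congr rfl fun w _ => ?_
      rw [← Finset.mul_sum]
      congr 1
      have hsplit := Finset.sum_filter_add_sum_filter_not univ
        (fun q : Y × Z => dec q.1 = w) (PYZX x)
      rw [hchsum x] at hsplit
      have hne : ∑ q ∈ univ.filter (fun q : Y × Z => ¬ dec q.1 = w), PYZX x q = E w x := by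
        apply Finset.sum_congr _ (fun _ _ => rfl)
        simp [hEdef]
      linarith
    have expand : ∑ x, ∑ w, f w x * (1 - E w x)
        = (∑ w, ∑ x, f w x) - ∑ w, ∑ x, f w x * E w x := by
      rw [Finset.sum_comm]
      simp only [mul_sub, mul_one, Finset.sum_sub_distrib]
    calc 1 - ε ≤ (∑ w, ∑ x, f w x) - ∑ w, ∑ x, f w x * E w x := by
          rw [hfsum]; linarith
      _ = ∑ x, ∑ w, f w x * (1 - E w x) := expand.symm
      _ = ∑ x, ∑ q : Y × Z, f (dec q.1) x * PYZX x q := by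
          exact Finset.sum_congr rfl fun x _ => (hx x).symm
  have hB : ∑ x, ∑ q : Y × Z, f (dec q.1) x * PYZX x q * jnd (dec q.1) q.2 ≤ τ + δ := by
    -- rewrite q-sum as double sum and fiber over the decoded message
    have step1 : ∀ x, ∑ q : Y × Z, f (dec q.1) x * PYZX x q * jnd (dec q.1) q.2
        = ∑ w, ∑ y ∈ univ.filter (fun y => dec y = w), ∑ z,
            f w x * PYZX x (y, z) * jnd w z := by
      intro x
      rw [Fintype.sum_prod_type]
      exact fiberY (fun w y => ∑ z, f w x * PYZX x (y, z) * jnd w z)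
    have step2 : ∀ x, ∑ w, ∑ y ∈ univ.filter (fun y => dec y = w), ∑ z,
            f w x * PYZX x (y, z) * jnd w z
        ≤ ∑ w, ∑ y, ∑ z, f w x * PYZX x (y, z) * jnd w z := by
      intro x
      refine Finset.sum_le_sum fun w _ => ?_
      refine Finset.sum_le_sum_of_subset_of_nonneg (Finset.subset_univ _) ?_
      intro y _ _
      exact Finset.sum_nonneg fun z _ =>
        mul_nonneg (mul_nonneg (hf0 w x) (hchpos x (y, z))) (hjnd0 w z)
    have step3 : ∀ w x, ∑ y, ∑ z, f w x * PYZX x (y, z) * jnd w z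
        = f w x * ∑ z, g x z * jnd w z := by
      intro w x
      rw [Finset.sum_comm]
      simp only [mul_assoc, ← Finset.mul_sum]
      congr 1
      refine Finset.sum_congr rfl fun z _ => ?_
      rw [← Finset.sum_mul]
    have step4 : ∑ x, ∑ w, f w x * ∑ z, g x z * jnd w z
        = ∑ w, ∑ z, Pwz w z * jnd w z := by
      rw [Finset.sum_comm]
      refine Finset.sum_congr rfl fun w _ => ?_
      simp only [Finset.mul_sum]
      rw [Finset.sum_comm]
      refine Finset.sum_congr rfl fun z _ => ?_
      simp only [← mul_assoc]
      rw [← Finset.sum_mul]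
    have split : ∀ w z, Pwz w z * jnd w z
        ≤ τ * (PZ z * Qd w z) + max (Pwz w z - (M:ℝ)⁻¹ * PZ z) 0 := by
      intro w z
      by_cases h : Qd w z ≤ c
      · have hj : jnd w z = 0 := by simp only [hjnddef]; exact if_pos h
        rw [hj, mul_zero]
        have h1 : 0 ≤ τ * (PZ z * Qd w z) :=
          mul_nonneg hτ0.le (mul_nonneg (hPZ0 z) (hQd0 w z))
        have h2 : (0:ℝ) ≤ max (Pwz w z - (M:ℝ)⁻¹ * PZ z) 0 := le_max_right _ _
        linarith
      · have hj : jnd w z = 1 := by simp only [hjnddef]; exact if_neg h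
        rw [hj, mul_one]
        have hc' : c < Qd w z := lt_of_not_ge h
        have hMc : (M:ℝ)⁻¹ = τ * c := by
          rw [hcdef]; field_simp
        have h1 : (M:ℝ)⁻¹ * PZ z ≤ τ * (PZ z * Qd w z) := by
          calc (M:ℝ)⁻¹ * PZ z = τ * c * PZ z := by rw [hMc]
            _ ≤ τ * Qd w z * PZ z := by
                refine mul_le_mul_of_nonneg_right ?_ (hPZ0 z)
                exact mul_le_mul_of_nonneg_left hc'.le hτ0.le
            _ = τ * (PZ z * Qd w z) := by ring
        have h2 : Pwz w z - (M:ℝ)⁻¹ * PZ z ≤ max (Pwz w z - (M:ℝ)⁻¹ * PZ z) 0 :=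
          le_max_left _ _
        linarith
    have s1 : ∑ w, ∑ z, τ * (PZ z * Qd w z) = τ := by
      rw [Finset.sum_comm]
      have hz : ∀ z, ∑ w, τ * (PZ z * Qd w z) = τ * PZ z := by
        intro z
        simp only [← Finset.mul_sum]
        rw [hQdsum z, mul_one]
      calc ∑ z, ∑ w, τ * (PZ z * Qd w z) = ∑ z, τ * PZ z := by simp only [hz]
        _ = τ := by rw [← Finset.mul_sum, hPZsum, mul_one]
    calc ∑ x, ∑ q : Y × Z, f (dec q.1) x * PYZX x q * jnd (dec q.1) q.2
        ≤ ∑ x, ∑ w, ∑ y, ∑ z, f w x * PYZX x (y, z) * jnd w z := by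
          refine Finset.sum_le_sum fun x _ => ?_
          rw [step1 x]; exact step2 x
      _ = ∑ x, ∑ w, f w x * ∑ z, g x z * jnd w z := by
          refine Finset.sum_congr rfl fun x _ => Finset.sum_congr rfl fun w _ => step3 w x
      _ = ∑ w, ∑ z, Pwz w z * jnd w z := step4
      _ ≤ ∑ w, ∑ z, (τ * (PZ z * Qd w z) + max (Pwz w z - (M:ℝ)⁻¹ * PZ z) 0) := by
          refine Finset.sum_le_sum fun w _ => Finset.sum_le_sum fun z _ => split w z
      _ = (∑ w, ∑ z, τ * (PZ z * Qd w z)) + ∑ w, ∑ z, max (Pwz w z - (M:ℝ)⁻¹ * PZ z) 0 := by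
          simp only [Finset.sum_add_distrib]
      _ ≤ τ + δ := by
          rw [s1]; linarith [hmaxsum]
  -- ========== Q side ==========
  have hQbound : ∑ t : X × Y × Z,
      ((∑ m, f m t.1 * g t.1 t.2.2) * QYZ t.2.2 t.2.1) * T t ≤ (M:ℝ)⁻¹ + c * δ := by
    have q1 : ∑ t : X × Y × Z, ((∑ m, f m t.1 * g t.1 t.2.2) * QYZ t.2.2 t.2.1) * T t
        = ∑ x, ∑ y, ∑ z, f (dec y) x * g x z * QYZ z y * ind (dec y) z := by
      rw [Fintype.sum_prod_type]
      refine Finset.sum_congr rfl fun x _ => ?_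
      rw [Fintype.sum_prod_type]
      refine Finset.sum_congr rfl fun y _ => Finset.sum_congr rfl fun z _ => hQT (x, y, z)
    have q2 : ∀ x, ∑ y, ∑ z, f (dec y) x * g x z * QYZ z y * ind (dec y) z
        = ∑ w, ∑ y ∈ univ.filter (fun y => dec y = w), ∑ z,
            f w x * g x z * QYZ z y * ind w z := by
      intro x
      exact fiberY (fun w y => ∑ z, f w x * g x z * QYZ z y * ind w z)
    have q3 : ∀ x w, ∑ y ∈ univ.filter (fun y => dec y = w), ∑ z,
            f w x * g x z * QYZ z y * ind w z
        = ∑ z, f w x * g x z * Qd w z * ind w z := by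
      intro x w
      rw [Finset.sum_comm]
      refine Finset.sum_congr rfl fun z _ => ?_
      have hterm : ∀ y, f w x * g x z * QYZ z y * ind w z
          = QYZ z y * (f w x * g x z * ind w z) := fun y => by ring
      calc ∑ y ∈ univ.filter (fun y => dec y = w), f w x * g x z * QYZ z y * ind w z
          = ∑ y ∈ univ.filter (fun y => dec y = w), QYZ z y * (f w x * g x z * ind w z) :=
            Finset.sum_congr rfl fun y _ => hterm y
        _ = Qd w z * (f w x * g x z * ind w z) := by rw [← Finset.sum_mul]
        _ = f w x * g x z * Qd w z * ind w z := by ring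
    have q4 : ∑ x, ∑ w, ∑ z, f w x * g x z * Qd w z * ind w z
        = ∑ w, ∑ z, Pwz w z * (Qd w z * ind w z) := by
      rw [Finset.sum_comm]
      refine Finset.sum_congr rfl fun w _ => ?_
      rw [Finset.sum_comm]
      refine Finset.sum_congr rfl fun z _ => ?_
      calc ∑ x, f w x * g x z * Qd w z * ind w z
          = ∑ x, f w x * g x z * (Qd w z * ind w z) := by
            refine Finset.sum_congr rfl fun x _ => by ring
        _ = Pwz w z * (Qd w z * ind w z) := by rw [← Finset.sum_mul]
    have hs0 : ∀ w z, 0 ≤ Qd w z * ind w z :=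
      fun w z => mul_nonneg (hQd0 w z) (hind0 w z)
    have hsc : ∀ w z, Qd w z * ind w z ≤ c := by
      intro w z
      by_cases h : Qd w z ≤ c
      · have : ind w z ≤ 1 := hind1 w z
        calc Qd w z * ind w z ≤ Qd w z * 1 :=
              mul_le_mul_of_nonneg_left this (hQd0 w z)
          _ = Qd w z := mul_one _
          _ ≤ c := h
      · have : ind w z = 0 := by simp only [hinddef]; exact if_neg h
        rw [this, mul_zero]; exact hc0.le
    have hsq : ∀ w z, Qd w z * ind w z ≤ Qd w z := by
      intro w z
      calc Qd w z * ind w z ≤ Qd w z * 1 :=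
            mul_le_mul_of_nonneg_left (hind1 w z) (hQd0 w z)
        _ = Qd w z := mul_one _
    have qsplit : ∀ w z, Pwz w z * (Qd w z * ind w z)
        ≤ (M:ℝ)⁻¹ * (PZ z * Qd w z) + max (Pwz w z - (M:ℝ)⁻¹ * PZ z) 0 * c := by
      intro w z
      have e : Pwz w z * (Qd w z * ind w z)
          = (M:ℝ)⁻¹ * PZ z * (Qd w z * ind w z)
            + (Pwz w z - (M:ℝ)⁻¹ * PZ z) * (Qd w z * ind w z) := by ring
      have t1 : (M:ℝ)⁻¹ * PZ z * (Qd w z * ind w z) ≤ (M:ℝ)⁻¹ * (PZ z * Qd w z) := by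
        have : (M:ℝ)⁻¹ * PZ z * (Qd w z * ind w z) ≤ (M:ℝ)⁻¹ * PZ z * Qd w z :=
          mul_le_mul_of_nonneg_left (hsq w z)
            (mul_nonneg (inv_nonneg.2 hM'.le) (hPZ0 z))
        linarith [this, (by ring : (M:ℝ)⁻¹ * PZ z * Qd w z = (M:ℝ)⁻¹ * (PZ z * Qd w z))]
      have t2 : (Pwz w z - (M:ℝ)⁻¹ * PZ z) * (Qd w z * ind w z)
          ≤ max (Pwz w z - (M:ℝ)⁻¹ * PZ z) 0 * c := by
        rcases le_or_gt (Pwz w z - (M:ℝ)⁻¹ * PZ z) 0 with hd | hd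
        · have : (Pwz w z - (M:ℝ)⁻¹ * PZ z) * (Qd w z * ind w z) ≤ 0 :=
            mul_nonpos_of_nonpos_of_nonneg hd (hs0 w z)
          have h2 : 0 ≤ max (Pwz w z - (M:ℝ)⁻¹ * PZ z) 0 * c :=
            mul_nonneg (le_max_right _ _) hc0.le
          linarith
        · have hmax : max (Pwz w z - (M:ℝ)⁻¹ * PZ z) 0 = Pwz w z - (M:ℝ)⁻¹ * PZ z :=
            max_eq_left hd.le
          rw [hmax]
          exact mul_le_mul_of_nonneg_left (hsc w z) hd.le
      linarith [e, t1, t2]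
    have qs1 : ∑ w, ∑ z, (M:ℝ)⁻¹ * (PZ z * Qd w z) = (M:ℝ)⁻¹ := by
      rw [Finset.sum_comm]
      have hz : ∀ z, ∑ w, (M:ℝ)⁻¹ * (PZ z * Qd w z) = (M:ℝ)⁻¹ * PZ z := by
        intro z
        simp only [← Finset.mul_sum]
        rw [hQdsum z, mul_one]
      calc ∑ z, ∑ w, (M:ℝ)⁻¹ * (PZ z * Qd w z) = ∑ z, (M:ℝ)⁻¹ * PZ z := by simp only [hz]
        _ = (M:ℝ)⁻¹ := by rw [← Finset.mul_sum, hPZsum, mul_one]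
    have qs2 : ∑ w, ∑ z, max (Pwz w z - (M:ℝ)⁻¹ * PZ z) 0 * c ≤ c * δ := by
      have : ∑ w, ∑ z, max (Pwz w z - (M:ℝ)⁻¹ * PZ z) 0 * c
          = (∑ w, ∑ z, max (Pwz w z - (M:ℝ)⁻¹ * PZ z) 0) * c := by
        rw [Finset.sum_mul]
        exact Finset.sum_congr rfl fun w _ => by rw [Finset.sum_mul]
      rw [this]
      calc (∑ w, ∑ z, max (Pwz w z - (M:ℝ)⁻¹ * PZ z) 0) * c ≤ δ * c :=
            mul_le_mul_of_nonneg_right hmaxsum hc0.le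
        _ = c * δ := mul_comm _ _
    calc ∑ t : X × Y × Z, ((∑ m, f m t.1 * g t.1 t.2.2) * QYZ t.2.2 t.2.1) * T t
        = ∑ x, ∑ y, ∑ z, f (dec y) x * g x z * QYZ z y * ind (dec y) z := q1
      _ = ∑ x, ∑ w, ∑ z, f w x * g x z * Qd w z * ind w z := by
          refine Finset.sum_congr rfl fun x _ => ?_
          rw [q2 x]
          exact Finset.sum_congr rfl fun w _ => q3 x w
      _ = ∑ w, ∑ z, Pwz w z * (Qd w z * ind w z) := q4
      _ ≤ ∑ w, ∑ z, ((M:ℝ)⁻¹ * (PZ z * Qd w z) + max (Pwz w z - (M:ℝ)⁻¹ * PZ z) 0 * c) := by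
          refine Finset.sum_le_sum fun w _ => Finset.sum_le_sum fun z _ => qsplit w z
      _ = (∑ w, ∑ z, (M:ℝ)⁻¹ * (PZ z * Qd w z))
            + ∑ w, ∑ z, max (Pwz w z - (M:ℝ)⁻¹ * PZ z) 0 * c := by
          simp only [Finset.sum_add_distrib]
      _ ≤ (M:ℝ)⁻¹ + c * δ := by rw [qs1]; linarith [qs2]
  -- ========== conclude via betaNP ==========
  have hPside : 1 - ε - δ - τ ≤ ∑ t : X × Y × Z,
      (∑ m, f m t.1 * PYZX t.1 t.2) * T t := by
    have hre : ∑ t : X × Y × Z, (∑ m, f m t.1 * PYZX t.1 t.2) * T t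
        = ∑ x, ∑ q : Y × Z, f (dec q.1) x * PYZX x q * ind (dec q.1) q.2 := by
      rw [Fintype.sum_prod_type]
      exact Finset.sum_congr rfl fun x _ => Finset.sum_congr rfl fun q _ => hPT (x, q)
    rw [hre]
    have expand : ∀ (x : X) (q : Y × Z), f (dec q.1) x * PYZX x q * ind (dec q.1) q.2
        = f (dec q.1) x * PYZX x q - f (dec q.1) x * PYZX x q * jnd (dec q.1) q.2 := by
      intro x q; rw [hij]; ring
    calc 1 - ε - δ - τ
        ≤ (∑ x, ∑ q : Y × Z, f (dec q.1) x * PYZX x q)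
          - ∑ x, ∑ q : Y × Z, f (dec q.1) x * PYZX x q * jnd (dec q.1) q.2 := by
          linarith [hA, hB]
      _ = ∑ x, ∑ q : Y × Z, f (dec q.1) x * PYZX x q * ind (dec q.1) q.2 := by
          simp only [expand, Finset.sum_sub_distrib]
  have hQnonneg : ∀ t : X × Y × Z,
      0 ≤ (∑ m, f m t.1 * ∑ y, PYZX t.1 (y, t.2.2)) * QYZ t.2.2 t.2.1 := by
    intro t
    refine mul_nonneg (Finset.sum_nonneg fun m _ => ?_) (hQpos _ _)
    exact mul_nonneg (hf0 m t.1) (Finset.sum_nonneg fun y _ => hchpos _ _)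
  have hbdd : BddBelow {b : ℝ | ∃ T' : X × Y × Z → ℝ, (∀ a, 0 ≤ T' a) ∧ (∀ a, T' a ≤ 1) ∧
      (1 - ε - δ - τ) ≤ ∑ a, (∑ m : Fin M, f m a.1 * PYZX a.1 a.2) * T' a ∧
      b = ∑ a, ((∑ m : Fin M, f m a.1 * ∑ y, PYZX a.1 (y, a.2.2)) * QYZ a.2.2 a.2.1) * T' a} := by
    refine ⟨0, fun b hb => ?_⟩
    obtain ⟨T', h0, _, _, rfl⟩ := hb
    exact Finset.sum_nonneg fun t _ => mul_nonneg (hQnonneg t) (h0 t)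
  have hmem : (∑ t : X × Y × Z,
      ((∑ m, f m t.1 * ∑ y, PYZX t.1 (y, t.2.2)) * QYZ t.2.2 t.2.1) * T t)
      ∈ {b : ℝ | ∃ T' : X × Y × Z → ℝ, (∀ a, 0 ≤ T' a) ∧ (∀ a, T' a ≤ 1) ∧
      (1 - ε - δ - τ) ≤ ∑ a, (∑ m : Fin M, f m a.1 * PYZX a.1 a.2) * T' a ∧
      b = ∑ a, ((∑ m : Fin M, f m a.1 * ∑ y, PYZX a.1 (y, a.2.2)) * QYZ a.2.2 a.2.1) * T' a} :=
    ⟨T, hT0, hT1, hPside, rfl⟩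
  have hβ : betaNP (1 - ε - δ - τ)
      (fun t : X × Y × Z => ∑ m : Fin M, f m t.1 * PYZX t.1 t.2)
      (fun t : X × Y × Z =>
        (∑ m : Fin M, f m t.1 * ∑ y, PYZX t.1 (y, t.2.2)) * QYZ t.2.2 t.2.1)
      ≤ (M:ℝ)⁻¹ + c * δ := by
    refine le_trans (csInf_le hbdd hmem) ?_
    exact hQbound
  calc (M:ℝ) * τ * betaNP (1 - ε - δ - τ)
        (fun t : X × Y × Z => ∑ m : Fin M, f m t.1 * PYZX t.1 t.2)
        (fun t : X × Y × Z =>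
          (∑ m : Fin M, f m t.1 * ∑ y, PYZX t.1 (y, t.2.2)) * QYZ t.2.2 t.2.1)
      ≤ (M:ℝ) * τ * ((M:ℝ)⁻¹ + c * δ) := mul_le_mul_of_nonneg_left hβ hMτ.le
    _ = τ + δ := by
        rw [hcdef]
        field_simp

/-- converse bound, Theorem 8: for every auxiliary kernel `Q_{Y|Z}`
and every `(M, ε, δ)_avg` secrecy code inducing the joint distribution `P_{XYZ}`,
and every `τ ∈ (0, 1−ε−δ)`,
`M·τ·β_{1−ε−δ−τ}(P_{XYZ}, P_{XZ}·Q_{Y|Z}) ≤ τ + δ`. -/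
theorem wiretap_converse_beta
    {X Y Z : Type*} [Fintype X] [Fintype Y] [Fintype Z]
    (PYZX : X → Y × Z → ℝ)
    (hchpos : ∀ x q, 0 ≤ PYZX x q) (hchsum : ∀ x, ∑ q, PYZX x q = 1)
    (QYZ : Z → Y → ℝ)
    (hQpos : ∀ z y, 0 ≤ QYZ z y) (hQsum : ∀ z, ∑ y, QYZ z y = 1)
    (M : ℕ) (hM : 0 < M)
    (PW : Fin M → ℝ) (hPWpos : ∀ m, 0 ≤ PW m) (hPWsum : ∑ m, PW m = 1)
    (enc : Fin M → X → ℝ)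
    (hencpos : ∀ m x, 0 ≤ enc m x) (hencsum : ∀ m, ∑ x, enc m x = 1)
    (dec : Y → Fin M)
    (ε δ : ℝ)
    -- average error probability constraint `P[g(Y) ≠ W] ≤ ε`
    (herr : ∑ m : Fin M, PW m * ∑ x, enc m x *
        ∑ q ∈ univ.filter (fun q : Y × Z => dec q.1 ≠ m), PYZX x q ≤ ε)
    -- average secrecy constraint `d(P_{WZ}, Q_M^unif × P_Z) ≤ δ`
    (hsec : tv (fun q : Fin M × Z =>
          PW q.1 * ∑ x, enc q.1 x * ∑ y, PYZX x (y, q.2))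
        (fun q : Fin M × Z => (M : ℝ)⁻¹ *
          ∑ m : Fin M, PW m * ∑ x, enc m x * ∑ y, PYZX x (y, q.2)) ≤ δ)
    (τ : ℝ) (hτ0 : 0 < τ) (hτ : τ < 1 - ε - δ) :
    (M : ℝ) * τ * betaNP (1 - ε - δ - τ)
        (fun t : X × Y × Z => ∑ m : Fin M, PW m * enc m t.1 * PYZX t.1 t.2)
        (fun t : X × Y × Z =>
          (∑ m : Fin M, PW m * enc m t.1 * ∑ y, PYZX t.1 (y, t.2.2)) *
            QYZ t.2.2 t.2.1)
      ≤ τ + δ := by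
  classical
  have hfsum : ∑ m : Fin M, ∑ x, PW m * enc m x = 1 := by
    calc ∑ m : Fin M, ∑ x, PW m * enc m x = ∑ m : Fin M, PW m * ∑ x, enc m x := by
          simp only [← Finset.mul_sum]
      _ = ∑ m : Fin M, PW m := by simp only [hencsum, mul_one]
      _ = 1 := hPWsum
  have herr' : ∑ m : Fin M, ∑ x, (PW m * enc m x) *
      ∑ q ∈ univ.filter (fun q : Y × Z => dec q.1 ≠ m), PYZX x q ≤ ε := by
    calc ∑ m : Fin M, ∑ x, (PW m * enc m x) *
          ∑ q ∈ univ.filter (fun q : Y × Z => dec q.1 ≠ m), PYZX x q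
        = ∑ m : Fin M, PW m * ∑ x, enc m x *
          ∑ q ∈ univ.filter (fun q : Y × Z => dec q.1 ≠ m), PYZX x q := by
          simp only [Finset.mul_sum, mul_assoc]
      _ ≤ ε := herr
  have hsec' : tv (fun p : Fin M × Z => ∑ x, (PW p.1 * enc p.1 x) * ∑ y, PYZX x (y, p.2))
      (fun p : Fin M × Z => (M : ℝ)⁻¹ *
        ∑ m : Fin M, ∑ x, (PW m * enc m x) * ∑ y, PYZX x (y, p.2)) ≤ δ := by
    have e1 : (fun p : Fin M × Z => ∑ x, (PW p.1 * enc p.1 x) * ∑ y, PYZX x (y, p.2))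
        = (fun p : Fin M × Z => PW p.1 * ∑ x, enc p.1 x * ∑ y, PYZX x (y, p.2)) := by
      funext p
      simp only [Finset.mul_sum, mul_assoc]
    have e2 : (fun p : Fin M × Z => (M : ℝ)⁻¹ *
          ∑ m : Fin M, ∑ x, (PW m * enc m x) * ∑ y, PYZX x (y, p.2))
        = (fun p : Fin M × Z => (M : ℝ)⁻¹ *
          ∑ m : Fin M, PW m * ∑ x, enc m x * ∑ y, PYZX x (y, p.2)) := by
      funext p
      simp only [Finset.mul_sum, mul_assoc]
    rw [e1, e2]
    exact hsec
  exact wiretap_core PYZX hchpos hchsum QYZ hQpos hQsum M hM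
    (fun m x => PW m * enc m x)
    (fun m x => mul_nonneg (hPWpos m) (hencpos m x))
    hfsum dec ε δ herr' hsec' τ hτ0
end
end

section
/- Let P_{YZ|X} be a semi-deterministic wiretap channel over finite sets X, Y, Z: P_{Y|X}(y|x) = 1{y = f(x)} for a surjective function f : X → Y, and P_{Z|X} is an arbitrary channel from X to Z. Then every (M, ε, δ)_avg secrecy code with ε < 1 satisfies: there exist a probability distribution P_X on X and a probability distribution Q_Z on Z such that E_{|Y|/(M(1−ε))}( P_{YZ|X} ∘ P_X, Q_Y^unif × Q_Z ) ≤ δ/(1−ε), where P_{YZ|X} ∘ P_X is the joint distribution on Y × Z induced by input P_X and Q_Y^unif is uniform on Y. -/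
open Finset
open scoped Classical

noncomputable section

/-- The `E_γ` metric `E_γ(P,Q) = ∑_a max (P a − γ·Q a) 0`. -/
def Egamma {A : Type*} [Fintype A] (γ : ℝ) (P Q : A → ℝ) : ℝ :=
  ∑ a, max (P a - γ * Q a) 0

/-- sum over image of nonneg function is at most pushforward sum -/
lemma sum_image_le_aux {α β : Type*} [DecidableEq β] (s : Finset α) (g : α → β)
    (h : β → ℝ) (hh : ∀ b, 0 ≤ h b) :
    ∑ b ∈ s.image g, h b ≤ ∑ a ∈ s, h (g a) := by
  rw [← Finset.sum_fiberwise_of_maps_to (g := g) (fun a ha => Finset.mem_image_of_mem g ha)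
    (fun a => h (g a))]
  refine Finset.sum_le_sum fun b hb => ?_
  obtain ⟨a, ha, rfl⟩ := Finset.mem_image.mp hb
  have hmem : a ∈ s.filter (fun x => g x = g a) := Finset.mem_filter.mpr ⟨ha, rfl⟩
  calc h (g a) = ∑ c ∈ {a}, h (g c) := by simp
    _ ≤ ∑ c ∈ s.filter (fun x => g x = g a), h (g c) := by
        refine Finset.sum_le_sum_of_subset_of_nonneg ?_ (fun c _ _ => hh _)
        simpa using hmem


lemma max_zero_eq_half (t : ℝ) : max t 0 = (t + |t|) / 2 := by
  rcases le_or_gt 0 t with h | h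
  · rw [max_eq_left h, abs_of_nonneg h]; ring
  · rw [max_eq_right h.le, abs_of_neg h]; ring

/-- converse for semi-deterministic wiretap channels: for the
channel `P_{YZ|X}(y,z|x) = 1{y = f(x)}·P_{Z|X}(z|x)` with `f` surjective, every
`(M, ε, δ)_avg` secrecy code with `ε < 1` satisfies: there exist distributions
`P_X` on `X` and `Q_Z` on `Z` with
`E_{|Y|/(M(1−ε))}(P_{YZ|X} ∘ P_X, Q_Y^unif × Q_Z) ≤ δ/(1−ε)`. -/
theorem semideterministic_converse
    {X Y Z : Type*} [Fintype X] [Fintype Y] [Fintype Z]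
    (f : X → Y) (hf : Function.Surjective f)
    (PZX : X → Z → ℝ)
    (hpos : ∀ x z, 0 ≤ PZX x z) (hsum : ∀ x, ∑ z, PZX x z = 1)
    (M : ℕ) (hM : 0 < M)
    (PW : Fin M → ℝ) (hPWpos : ∀ m, 0 ≤ PW m) (hPWsum : ∑ m, PW m = 1)
    (enc : Fin M → X → ℝ)
    (hencpos : ∀ m x, 0 ≤ enc m x) (hencsum : ∀ m, ∑ x, enc m x = 1)
    (dec : Y → Fin M)
    (ε δ : ℝ) (hε : ε < 1)
    -- average error probability constraint `P[g(Y) ≠ W] ≤ ε` (here `Y = f(X)`)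
    (herr : ∑ m : Fin M, PW m *
        ∑ x ∈ univ.filter (fun x => dec (f x) ≠ m), enc m x ≤ ε)
    -- average secrecy constraint `d(P_{WZ}, Q_M^unif × P_Z) ≤ δ`
    (hsec : tv (fun q : Fin M × Z => PW q.1 * ∑ x, enc q.1 x * PZX x q.2)
        (fun q : Fin M × Z => (M : ℝ)⁻¹ *
          ∑ m : Fin M, PW m * ∑ x, enc m x * PZX x q.2) ≤ δ) :
    ∃ (PX : X → ℝ) (QZ : Z → ℝ),
      (∀ x, 0 ≤ PX x) ∧ (∑ x, PX x = 1) ∧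
      (∀ z, 0 ≤ QZ z) ∧ (∑ z, QZ z = 1) ∧
      Egamma ((Fintype.card Y : ℝ) / ((M : ℝ) * (1 - ε)))
          (fun q : Y × Z =>
            ∑ x, PX x * (if q.1 = f x then PZX x q.2 else 0))
          (fun q : Y × Z => (Fintype.card Y : ℝ)⁻¹ * QZ q.2)
        ≤ δ / (1 - ε) := by
    classical
  -- basic positivity facts
  have hε1 : (0:ℝ) < 1 - ε := by linarith
  set e : ℝ := ∑ m : Fin M, PW m *
      ∑ x ∈ univ.filter (fun x => dec (f x) ≠ m), enc m x with he
  have he0 : 0 ≤ e := Finset.sum_nonneg fun m _ =>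
    mul_nonneg (hPWpos m) (Finset.sum_nonneg fun x _ => hencpos m x)
  have hpc : (0:ℝ) < 1 - e := by linarith
  have hδ0 : 0 ≤ δ := le_trans (by unfold tv; positivity) hsec
  have hXne : Nonempty X := by
    rcases isEmpty_or_nonempty X with hX | hX
    · exfalso
      have h1 := hencsum ⟨0, hM⟩
      simp at h1
    · exact hX
  have hYne : Nonempty Y := ⟨f (Classical.choice hXne)⟩
  have hcardY : (0:ℝ) < (Fintype.card Y : ℝ) := by
    exact_mod_cast Fintype.card_pos_iff.mpr hYne
  have hMR : (0:ℝ) < (M : ℝ) := by exact_mod_cast hM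
  -- the conditional input distribution and induced output distribution
  set QZ : Z → ℝ := fun z => ∑ m, PW m * ∑ x, enc m x * PZX x z with hQZdef
  set PX : X → ℝ := fun x => PW (dec (f x)) * enc (dec (f x)) x / (1 - e) with hPXdef
  have hQZ0 : ∀ z, 0 ≤ QZ z := fun z => Finset.sum_nonneg fun m _ =>
    mul_nonneg (hPWpos m) (Finset.sum_nonneg fun x _ =>
      mul_nonneg (hencpos m x) (hpos x z))
  have hQZsum : ∑ z, QZ z = 1 := by
    simp only [hQZdef]
    calc ∑ z, ∑ m, PW m * ∑ x, enc m x * PZX x z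
        = ∑ m, ∑ z, PW m * ∑ x, enc m x * PZX x z := Finset.sum_comm
      _ = ∑ m, PW m * ∑ z, ∑ x, enc m x * PZX x z := by
          exact Finset.sum_congr rfl fun m _ => (Finset.mul_sum _ _ _).symm
      _ = ∑ m, PW m * ∑ x, ∑ z, enc m x * PZX x z := by
          exact Finset.sum_congr rfl fun m _ => by rw [Finset.sum_comm]
      _ = ∑ m, PW m * ∑ x, enc m x * ∑ z, PZX x z := by
          refine Finset.sum_congr rfl fun m _ => ?_
          congr 1
          exact Finset.sum_congr rfl fun x _ => (Finset.mul_sum _ _ _).symm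
      _ = 1 := by simp only [hsum, mul_one, hencsum, hPWsum]
  -- the key normalization: total probability of correct decoding is 1 - e
  have hkey : ∑ x : X, PW (dec (f x)) * enc (dec (f x)) x = 1 - e := by
    have h1 : ∑ x : X, PW (dec (f x)) * enc (dec (f x)) x
        = ∑ m : Fin M, ∑ x ∈ univ.filter (fun x => dec (f x) = m),
            PW (dec (f x)) * enc (dec (f x)) x :=
      (Finset.sum_fiberwise_of_maps_to (fun x _ => Finset.mem_univ _) _).symm
    have h2 : ∀ m : Fin M, ∑ x ∈ univ.filter (fun x => dec (f x) = m),
        PW (dec (f x)) * enc (dec (f x)) x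
        = PW m * (1 - ∑ x ∈ univ.filter (fun x => dec (f x) ≠ m), enc m x) := by
      intro m
      have hsplit := Finset.sum_filter_add_sum_filter_not univ
        (fun x => dec (f x) = m) (enc m)
      rw [hencsum m] at hsplit
      have h3 : ∑ x ∈ univ.filter (fun x => dec (f x) = m),
          PW (dec (f x)) * enc (dec (f x)) x
          = ∑ x ∈ univ.filter (fun x => dec (f x) = m), PW m * enc m x := by
        refine Finset.sum_congr rfl fun x hx => ?_
        rw [(Finset.mem_filter.mp hx).2]
      rw [h3, ← Finset.mul_sum]
      congr 1
      linarith
    rw [h1, Finset.sum_congr rfl fun m _ => h2 m]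
    have : ∑ m : Fin M, PW m *
        (1 - ∑ x ∈ univ.filter (fun x => dec (f x) ≠ m), enc m x)
        = ∑ m : Fin M, (PW m - PW m *
          ∑ x ∈ univ.filter (fun x => dec (f x) ≠ m), enc m x) := by
      exact Finset.sum_congr rfl fun m _ => by ring
    rw [this, Finset.sum_sub_distrib, hPWsum, ← he]
  have hPX0 : ∀ x, 0 ≤ PX x := fun x =>
    div_nonneg (mul_nonneg (hPWpos _) (hencpos _ _)) hpc.le
  have hPXsum : ∑ x, PX x = 1 := by
    simp only [hPXdef]
    rw [← Finset.sum_div, hkey, div_self hpc.ne']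
  refine ⟨PX, QZ, hPX0, hPXsum, hQZ0, hQZsum, ?_⟩
  set γ : ℝ := (Fintype.card Y : ℝ) / ((M:ℝ) * (1 - ε)) with hγ
  set P : Y × Z → ℝ :=
    fun q => ∑ x, PX x * (if q.1 = f x then PZX x q.2 else 0) with hPdef
  set Q : Y × Z → ℝ := fun q => (Fintype.card Y : ℝ)⁻¹ * QZ q.2 with hQdef
  set A : Finset (Y × Z) := univ.filter (fun a => 0 < P a - γ * Q a) with hA
  set g : Y × Z → Fin M × Z := fun a => (dec a.1, a.2) with hg
  set B : Finset (Fin M × Z) := A.image g with hB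
  set PWZ : Fin M × Z → ℝ := fun b => PW b.1 * ∑ x, enc b.1 x * PZX x b.2
    with hPWZ
  set Pc : Y × Z → ℝ := fun q => ∑ x, PW (dec (f x)) * enc (dec (f x)) x *
    (if q.1 = f x then PZX x q.2 else 0) with hPcdef
  set F : (Fin M × Z) × Y → ℝ := fun p => PW p.1.1 *
    ∑ x, enc p.1.1 x * (if p.2 = f x then PZX x p.1.2 else 0) with hF
  -- Egamma as a sum over the distinguishing set A
  have hEg : Egamma γ P Q = ∑ a ∈ A, (P a - γ * Q a) := by
    rw [Egamma, hA, Finset.sum_filter]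
    refine Finset.sum_congr rfl fun a _ => ?_
    rcases lt_or_ge 0 (P a - γ * Q a) with h | h
    · rw [if_pos h, max_eq_left h.le]
    · rw [if_neg (not_lt.mpr h), max_eq_right h]
  -- step 1 : (1-e) * P = Pc pointwise
  have hstep1 : ∀ q, (1 - e) * P q = Pc q := by
    intro q
    simp only [hPdef, hPcdef, hPXdef]
    rw [Finset.mul_sum]
    refine Finset.sum_congr rfl fun x _ => ?_
    split_ifs with h
    · field_simp
    · ring
  -- Pc q = F (g q, q.1)
  have hPcF : ∀ q : Y × Z, Pc q = F ((dec q.1, q.2), q.1) := by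
    intro q
    simp only [hPcdef, hF]
    rw [Finset.mul_sum]
    refine Finset.sum_congr rfl fun x _ => ?_
    split_ifs with h
    · rw [h]; ring
    · ring
  have hFnn : ∀ p, 0 ≤ F p := by
    intro p
    refine mul_nonneg (hPWpos _) (Finset.sum_nonneg fun x _ =>
      mul_nonneg (hencpos _ _) ?_)
    split_ifs with hc
    · exact hpos _ _
    · exact le_rfl
  -- step 2 : ∑_A Pc ≤ ∑_B PWZ
  have hstep2 : ∑ a ∈ A, Pc a ≤ ∑ b ∈ B, PWZ b := by
    have hinj : Set.InjOn (fun a : Y × Z => ((dec a.1, a.2), a.1)) A := by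
      intro a _ b _ hab
      have h1 : a.1 = b.1 := congrArg Prod.snd hab
      have h2 : a.2 = b.2 := congrArg (fun p => p.1.2) hab
      exact Prod.ext h1 h2
    have himg : ∑ a ∈ A, Pc a
        = ∑ p ∈ A.image (fun a : Y × Z => ((dec a.1, a.2), a.1)), F p := by
      rw [Finset.sum_image hinj]
      exact Finset.sum_congr rfl fun a _ => hPcF a
    have hsub : A.image (fun a : Y × Z => ((dec a.1, a.2), a.1)) ⊆ B ×ˢ univ := by
      intro p hp
      obtain ⟨a, ha, rfl⟩ := Finset.mem_image.mp hp
      exact Finset.mem_product.mpr ⟨Finset.mem_image_of_mem g ha, Finset.mem_univ _⟩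
    have hmono : ∑ p ∈ A.image (fun a : Y × Z => ((dec a.1, a.2), a.1)), F p
        ≤ ∑ p ∈ B ×ˢ univ, F p :=
      Finset.sum_le_sum_of_subset_of_nonneg hsub fun p _ _ => hFnn p
    have hprod : ∑ p ∈ B ×ˢ univ, F p = ∑ b ∈ B, PWZ b := by
      rw [Finset.sum_product]
      refine Finset.sum_congr rfl fun b _ => ?_
      simp only [hF, hPWZ]
      rw [← Finset.mul_sum]
      congr 1
      rw [Finset.sum_comm]
      refine Finset.sum_congr rfl fun x _ => ?_
      rw [← Finset.mul_sum]
      congr 1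
      simp
    rw [himg, ← hprod]
    exact hmono
  -- step 3 : ∑_B PWZ ≤ M⁻¹ ∑_B QZ + δ, via the secrecy constraint
  have hPWZsum : ∑ b : Fin M × Z, PWZ b = 1 := by
    rw [Fintype.sum_prod_type_right]
    have : ∀ z : Z, ∑ w : Fin M, PWZ (w, z) = QZ z := fun z => rfl
    rw [Finset.sum_congr rfl fun z _ => this z, hQZsum]
  have hQ2sum : ∑ b : Fin M × Z, (M:ℝ)⁻¹ * QZ b.2 = 1 := by
    rw [Fintype.sum_prod_type_right]
    have : ∀ z : Z, ∑ _w : Fin M, (M:ℝ)⁻¹ * QZ z = (M:ℝ) * ((M:ℝ)⁻¹ * QZ z) := by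
      intro z
      rw [Finset.sum_const, Finset.card_univ, Fintype.card_fin, nsmul_eq_mul]
    rw [Finset.sum_congr rfl fun z _ => this z]
    have : ∀ z : Z, (M:ℝ) * ((M:ℝ)⁻¹ * QZ z) = QZ z := by
      intro z
      rw [← mul_assoc, mul_inv_cancel₀ hMR.ne', one_mul]
    rw [Finset.sum_congr rfl fun z _ => this z, hQZsum]
  have hd0 : ∑ b : Fin M × Z, (PWZ b - (M:ℝ)⁻¹ * QZ b.2) = 0 := by
    rw [Finset.sum_sub_distrib, hPWZsum, hQ2sum, sub_self]
  have htvmatch : (1/2 : ℝ) * ∑ b : Fin M × Z, |PWZ b - (M:ℝ)⁻¹ * QZ b.2| ≤ δ := by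
    have : tv (fun q : Fin M × Z => PW q.1 * ∑ x, enc q.1 x * PZX x q.2)
        (fun q : Fin M × Z => (M : ℝ)⁻¹ *
          ∑ m : Fin M, PW m * ∑ x, enc m x * PZX x q.2)
        = (1/2 : ℝ) * ∑ b : Fin M × Z, |PWZ b - (M:ℝ)⁻¹ * QZ b.2| := rfl
    rw [← this]
    exact hsec
  have hstep3 : ∑ b ∈ B, PWZ b ≤ (M:ℝ)⁻¹ * ∑ b ∈ B, QZ b.2 + δ := by
    have h1 : ∑ b ∈ B, (PWZ b - (M:ℝ)⁻¹ * QZ b.2)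
        ≤ ∑ b ∈ B, max (PWZ b - (M:ℝ)⁻¹ * QZ b.2) 0 :=
      Finset.sum_le_sum fun b _ => le_max_left _ _
    have h2 : ∑ b ∈ B, max (PWZ b - (M:ℝ)⁻¹ * QZ b.2) 0
        ≤ ∑ b : Fin M × Z, max (PWZ b - (M:ℝ)⁻¹ * QZ b.2) 0 :=
      Finset.sum_le_sum_of_subset_of_nonneg (Finset.subset_univ _)
        (fun b _ _ => le_max_right _ _)
    have h3 : ∑ b : Fin M × Z, max (PWZ b - (M:ℝ)⁻¹ * QZ b.2) 0
        = (1/2 : ℝ) * ∑ b : Fin M × Z, |PWZ b - (M:ℝ)⁻¹ * QZ b.2| := by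
      have heq : ∑ b : Fin M × Z, max (PWZ b - (M:ℝ)⁻¹ * QZ b.2) 0
          = ∑ b : Fin M × Z,
            (PWZ b - (M:ℝ)⁻¹ * QZ b.2 + |PWZ b - (M:ℝ)⁻¹ * QZ b.2|) / 2 :=
        Finset.sum_congr rfl fun b _ => max_zero_eq_half _
      rw [heq, ← Finset.sum_div, Finset.sum_add_distrib, hd0, zero_add]
      ring
    have h4 : ∑ b ∈ B, (PWZ b - (M:ℝ)⁻¹ * QZ b.2)
        = ∑ b ∈ B, PWZ b - (M:ℝ)⁻¹ * ∑ b ∈ B, QZ b.2 := by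
      rw [Finset.sum_sub_distrib, Finset.mul_sum]
    have := le_trans h1 (le_trans h2 (le_of_eq h3))
    rw [h4] at this
    linarith [htvmatch]
  -- step 4 : contract the image sum
  have hstep4 : ∑ b ∈ B, QZ b.2 ≤ ∑ a ∈ A, QZ a.2 := by
    rw [hB]
    simpa using sum_image_le_aux A g (fun b => QZ b.2) (fun b => hQZ0 b.2)
  set S : ℝ := ∑ a ∈ A, QZ a.2 with hS
  have hS0 : 0 ≤ S := Finset.sum_nonneg fun a _ => hQZ0 a.2
  have hT1 : (1 - e) * ∑ a ∈ A, P a = ∑ a ∈ A, Pc a := by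
    rw [Finset.mul_sum]
    exact Finset.sum_congr rfl fun a _ => hstep1 a
  have hMinv : (0:ℝ) ≤ (M:ℝ)⁻¹ := by positivity
  have hT : (1 - e) * ∑ a ∈ A, P a ≤ (M:ℝ)⁻¹ * S + δ := by
    rw [hT1]
    calc ∑ a ∈ A, Pc a ≤ ∑ b ∈ B, PWZ b := hstep2
      _ ≤ (M:ℝ)⁻¹ * ∑ b ∈ B, QZ b.2 + δ := hstep3
      _ ≤ (M:ℝ)⁻¹ * S + δ := by nlinarith [hstep4]
  have hQside : γ * ∑ a ∈ A, Q a = S / ((M:ℝ) * (1 - ε)) := by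
    have hQa : ∑ a ∈ A, Q a = (Fintype.card Y : ℝ)⁻¹ * S := by
      rw [hS, Finset.mul_sum]
    rw [hQa, hγ]
    field_simp
  have hTle : ∑ a ∈ A, P a ≤ ((M:ℝ)⁻¹ * S + δ) / (1 - e) := by
    rw [le_div_iff₀ hpc]
    linarith [hT]
  have hnum : (0:ℝ) ≤ (M:ℝ)⁻¹ * S + δ := add_nonneg (mul_nonneg hMinv hS0) hδ0
  have hmono : ((M:ℝ)⁻¹ * S + δ) / (1 - e) ≤ ((M:ℝ)⁻¹ * S + δ) / (1 - ε) :=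
    div_le_div_of_nonneg_left hnum hε1 (by linarith)
  have hsplit : ((M:ℝ)⁻¹ * S + δ) / (1 - ε) = S / ((M:ℝ) * (1 - ε)) + δ / (1 - ε) := by
    field_simp
  rw [hEg, Finset.sum_sub_distrib, ← Finset.mul_sum, hQside]
  linarith [hTle, hmono]
end
end

section
/- Let P_{YZ|X} be a semi-deterministic wiretap channel over finite sets X, Y, Z (P_{Y|X}(y|x) = 1{y = f(x)} for a surjective f : X → Y, and P_{Z|X} an arbitrary channel). If an (M, ε, δ)_avg secrecy code exists for P_{YZ|X} with ε < 1, then for every positive integer M′ there exists an (M′, 0, δ′)_avg secrecy code for the same channel, where δ′ = δ/(1−ε) + (1/2)·√( M′/(M·(1−ε)) ); that is, one can trade secrecy for reliability. -/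
/-!
Discard the part of the code on which decoding fails and renormalise by `1 - e ≥ 1 - ε`: since the
decoder sees `f x`, success depends on `x` alone, so what remains is a zero-error code, and its law
`a / (1 - e)` of (message, eavesdropper output) satisfies `a ≤ P_{WZ}`. Then merge the `M` messages
into `M′` bins by a labelling `κ` and decode with `κ ∘ dec`, which keeps the error at zero.
To bound the leakage, split `a = min (a, P_Z / M) + excess`. The excess has mass at most
`d(P_{WZ}, unif × P_Z) ≤ δ`, and binning it costs at most its mass. For the bounded part, a
second-moment computation over a uniformly random `κ` (whose values are pairwise independent) and
Cauchy–Schwarz bound the average leakage by `½ √(M′/M · (1 - e))`, so some `κ` does as well.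
-/

open Finset
open scoped Classical

noncomputable section

namespace Wiretap

section TotalVariation

variable {A : Type*} [Fintype A]

theorem tv_nonneg (P Q : A → ℝ) : 0 ≤ tv P Q := by
  unfold tv; positivity

theorem tv_add_le (P Q P' Q' : A → ℝ) : tv (P + P') (Q + Q') ≤ tv P Q + tv P' Q' := by
  unfold tv
  rw [← mul_add, ← sum_add_distrib]
  gcongr with a
  simpa only [Pi.add_apply, add_sub_add_comm] using abs_add_le (P a - Q a) (P' a - Q' a)

theorem tv_const_mul {c : ℝ} (hc : 0 ≤ c) (P Q : A → ℝ) :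
    tv (fun a => c * P a) (fun a => c * Q a) = c * tv P Q := by
  simp only [tv, ← mul_sub, abs_mul, abs_of_nonneg hc, ← mul_sum]
  ring

theorem tv_le_of_nonneg {P Q : A → ℝ} (hP : ∀ a, 0 ≤ P a) (hQ : ∀ a, 0 ≤ Q a) :
    tv P Q ≤ (1 / 2) * (∑ a, P a + ∑ a, Q a) := by
  unfold tv
  rw [← sum_add_distrib]
  gcongr with a
  exact (abs_sub _ _).trans_eq (by rw [abs_of_nonneg (hP a), abs_of_nonneg (hQ a)])

theorem tv_eq_sum_posPart {P Q : A → ℝ} (h : ∑ a, P a = ∑ a, Q a) :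
    tv P Q = ∑ a, (P a - Q a)⁺ := by
  have hsplit : ∀ u : ℝ, |u| = 2 * u⁺ - u := fun u => by
    rw [← posPart_add_negPart u]; linarith [posPart_sub_negPart u]
  simp only [tv, hsplit, sum_sub_distrib, ← mul_sum, h, sub_self]
  ring

end TotalVariation

section Leakage

variable {ι Z : Type*} [Fintype ι] [Fintype Z]

/-- The distance `d(P_{WZ}, Q_unif × P_Z)` of a joint law of message and eavesdropper output. -/
def leakage (P : ι → Z → ℝ) : ℝ :=
  tv (fun q : ι × Z => P q.1 q.2) (fun q => (Fintype.card ι : ℝ)⁻¹ * ∑ m, P m q.2)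

theorem leakage_eq (P : ι → Z → ℝ) :
    leakage P = (1 / 2) * ∑ m, ∑ z, |P m z - (Fintype.card ι : ℝ)⁻¹ * ∑ m', P m' z| := by
  rw [leakage, tv, Fintype.sum_prod_type]

theorem leakage_add_le (P R : ι → Z → ℝ) : leakage (P + R) ≤ leakage P + leakage R := by
  refine (le_of_eq ?_).trans (tv_add_le _ _ _ _)
  simp only [leakage, Pi.add_apply, sum_add_distrib, mul_add]
  rfl

theorem leakage_const_mul {c : ℝ} (hc : 0 ≤ c) (P : ι → Z → ℝ) :
    leakage (fun m z => c * P m z) = c * leakage P := by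
  rw [leakage, leakage, ← tv_const_mul hc]
  simp only [← mul_sum, mul_left_comm c]

theorem sum_uniform_mul_marginal (P : ι → Z → ℝ) :
    ∑ q : ι × Z, (Fintype.card ι : ℝ)⁻¹ * ∑ m, P m q.2 = ∑ q : ι × Z, P q.1 q.2 := by
  rcases isEmpty_or_nonempty ι with hι | hι
  · simp
  · simp only [Fintype.sum_prod_type, sum_const, card_univ, nsmul_eq_mul, ← mul_sum]
    rw [← mul_assoc, inv_mul_cancel₀ (by positivity), one_mul, sum_comm]

theorem leakage_le_sum_of_nonneg {P : ι → Z → ℝ} (hP : ∀ m z, 0 ≤ P m z) :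
    leakage P ≤ ∑ m, ∑ z, P m z := by
  refine (tv_le_of_nonneg (fun q => hP q.1 q.2) fun q : ι × Z => ?_).trans_eq ?_
  · exact mul_nonneg (by positivity) (sum_nonneg fun m _ => hP m q.2)
  · rw [sum_uniform_mul_marginal, Fintype.sum_prod_type]
    ring

theorem leakage_eq_sum_posPart (P : ι → Z → ℝ) :
    leakage P = ∑ m, ∑ z, (P m z - (Fintype.card ι : ℝ)⁻¹ * ∑ m', P m' z)⁺ := by
  rw [leakage, tv_eq_sum_posPart (sum_uniform_mul_marginal P).symm, Fintype.sum_prod_type]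

end Leakage

section Binning

variable {ι β Z : Type*} [Fintype ι]

/-- The joint law of `(κ W, Z)` obtained from that of `(W, Z)`. -/
def bin (κ : ι → β) (P : ι → Z → ℝ) (j : β) (z : Z) : ℝ :=
  ∑ m ∈ univ.filter (fun m => κ m = j), P m z

theorem sum_bin [Fintype β] (κ : ι → β) (P : ι → Z → ℝ) (z : Z) :
    ∑ j, bin κ P j z = ∑ m, P m z :=
  sum_fiberwise univ κ (P · z)

theorem sum_sum_bin [Fintype β] [Fintype Z] (κ : ι → β) (P : ι → Z → ℝ) :
    ∑ j, ∑ z, bin κ P j z = ∑ m, ∑ z, P m z := by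
  rw [sum_comm, sum_comm (γ := ι)]
  exact sum_congr rfl fun z _ => sum_bin κ P z

theorem bin_nonneg (κ : ι → β) {P : ι → Z → ℝ} (hP : ∀ m z, 0 ≤ P m z) (j : β) (z : Z) :
    0 ≤ bin κ P j z :=
  sum_nonneg fun m _ => hP m z

theorem bin_add (κ : ι → β) (P R : ι → Z → ℝ) : bin κ (P + R) = bin κ P + bin κ R := by
  ext j z
  exact sum_add_distrib

theorem bin_eq_zero {κ : ι → β} {P : ι → Z → ℝ} {d : Z → ι} (hP : ∀ m z, d z ≠ m → P m z = 0)
    {j : β} {z : Z} (hj : κ (d z) ≠ j) : bin κ P j z = 0 :=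
  sum_eq_zero fun m hm => hP m z fun h => hj (h ▸ (mem_filter.1 hm).2)

theorem leakage_bin_le_sum [Fintype β] [Fintype Z] (κ : ι → β) {P : ι → Z → ℝ}
    (hP : ∀ m z, 0 ≤ P m z) : leakage (bin κ P) ≤ ∑ m, ∑ z, P m z :=
  (leakage_le_sum_of_nonneg (bin_nonneg κ hP)).trans_eq (sum_sum_bin κ P)

end Binning

section Channel

variable {ι β X Z : Type*} [Fintype X]

/-- The law `P_{WZ}` induced by `T = P_{WX}` through the channel `W = P_{Z|X}`. -/
def channelJoint (W : X → Z → ℝ) (T : ι → X → ℝ) (m : ι) (z : Z) : ℝ :=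
  ∑ x, T m x * W x z

theorem channelJoint_bin [Fintype ι] (W : X → Z → ℝ) (κ : ι → β) (T : ι → X → ℝ) :
    channelJoint W (bin κ T) = bin κ (channelJoint W T) := by
  ext j z
  simp only [channelJoint, bin, sum_mul]
  exact sum_comm

theorem channelJoint_const_mul (W : X → Z → ℝ) (c : ℝ) (T : ι → X → ℝ) :
    channelJoint W (fun m x => c * T m x) = fun m z => c * channelJoint W T m z := by
  ext m z
  simp only [channelJoint, mul_sum, mul_assoc]

theorem channelJoint_nonneg {W : X → Z → ℝ} {T : ι → X → ℝ} (hW : ∀ x z, 0 ≤ W x z)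
    (hT : ∀ m x, 0 ≤ T m x) (m : ι) (z : Z) : 0 ≤ channelJoint W T m z :=
  sum_nonneg fun x _ => mul_nonneg (hT m x) (hW x z)

theorem channelJoint_mono {W : X → Z → ℝ} {T T' : ι → X → ℝ} (hW : ∀ x z, 0 ≤ W x z)
    (hTT' : ∀ m x, T m x ≤ T' m x) (m : ι) (z : Z) :
    channelJoint W T m z ≤ channelJoint W T' m z :=
  sum_le_sum fun x _ => mul_le_mul_of_nonneg_right (hTT' m x) (hW x z)

theorem sum_channelJoint [Fintype ι] [Fintype Z] {W : X → Z → ℝ} (hW : ∀ x, ∑ z, W x z = 1)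
    (T : ι → X → ℝ) : ∑ m, ∑ z, channelJoint W T m z = ∑ m, ∑ x, T m x := by
  refine sum_congr rfl fun m _ => ?_
  simp only [channelJoint]
  rw [sum_comm]
  simp only [← mul_sum, hW, mul_one]

theorem tv_code_eq_leakage [Fintype ι] [Fintype Z] (W : X → Z → ℝ) (PW : ι → ℝ)
    (enc : ι → X → ℝ) :
    tv (fun q : ι × Z => PW q.1 * ∑ x, enc q.1 x * W x q.2)
        (fun q => (Fintype.card ι : ℝ)⁻¹ * ∑ m, PW m * ∑ x, enc m x * W x q.2) =
      leakage (channelJoint W fun m x => PW m * enc m x) := by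
  simp only [leakage, channelJoint, mul_sum, mul_assoc]

end Channel

section RandomBinning

variable {ι β Z : Type*} [Fintype ι] [Fintype β]

theorem sum_pi_apply (φ : β → ℝ) (i : ι) :
    ∑ κ : ι → β, φ (κ i) = Fintype.card β ^ (Fintype.card ι - 1) * ∑ b, φ b := by
  simpa [Fintype.piFinset_univ] using Fintype.sum_piFinset_apply φ univ i

theorem sum_pi_apply_mul_apply_eq_zero {φ : β → ℝ} (hφ : ∑ b, φ b = 0) (ψ : β → ℝ) {i i' : ι}
    (hii' : i ≠ i') : ∑ κ : ι → β, φ (κ i) * ψ (κ i') = 0 := by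
  set h : ι → β → ℝ := Function.update (Function.update (fun _ _ => 1) i' ψ) i φ
  calc ∑ κ : ι → β, φ (κ i) * ψ (κ i') = ∑ κ : ι → β, ∏ k, h k (κ k) := by
        refine sum_congr rfl fun κ _ => ?_
        rw [Fintype.prod_eq_mul i i' hii' fun k hk => by simp [h, hk.1, hk.2]]
        simp [h, hii'.symm]
    _ = ∏ k, ∑ b, h k b := (Fintype.prod_sum h).symm
    _ = 0 := prod_eq_zero (mem_univ i) (by simpa [h] using hφ)

theorem card_mul_sum_sq_sum_mul_apply {φ : β → ℝ} (hφ : ∑ b, φ b = 0) (w : ι → ℝ) :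
    Fintype.card β * ∑ κ : ι → β, (∑ m, w m * φ (κ m)) ^ 2 =
      Fintype.card (ι → β) * (∑ b, φ b ^ 2) * ∑ m, w m ^ 2 := by
  have hcross : ∀ m m', ∑ κ : ι → β, w m * φ (κ m) * (w m' * φ (κ m')) =
      if m = m' then Fintype.card β ^ (Fintype.card ι - 1) * (∑ b, φ b ^ 2) * w m ^ 2 else 0 := by
    intro m m'
    split_ifs with h
    · subst h
      simp only [← sq, mul_pow, ← mul_sum, sum_pi_apply (φ · ^ 2)]
      ring
    · simp only [mul_mul_mul_comm, ← mul_sum]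
      rw [sum_pi_apply_mul_apply_eq_zero hφ φ h, mul_zero]
  calc (Fintype.card β : ℝ) * ∑ κ : ι → β, (∑ m, w m * φ (κ m)) ^ 2
      = Fintype.card β * ∑ m, Fintype.card β ^ (Fintype.card ι - 1) * (∑ b, φ b ^ 2) * w m ^ 2 := by
        simp only [sq (∑ m, _), sum_mul_sum]
        rw [sum_comm]
        refine congrArg _ (sum_congr rfl fun m _ => ?_)
        rw [sum_comm]
        simp only [hcross, sum_ite_eq, mem_univ, if_true]
    _ = Fintype.card (ι → β) * (∑ b, φ b ^ 2) * ∑ m, w m ^ 2 := by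
        rcases isEmpty_or_nonempty ι with hι | hι
        · simp
        · have : (Fintype.card β : ℝ) * Fintype.card β ^ (Fintype.card ι - 1) =
              Fintype.card β ^ Fintype.card ι := by
            rw [← pow_succ', Nat.sub_add_cancel Fintype.card_pos]
          rw [Fintype.card_fun]
          push_cast
          rw [← this, ← mul_sum]
          ring

theorem sum_abs_sum_fiber_sub_le [Nonempty β] (w : ι → ℝ) (j : β) :
    ∑ κ : ι → β, |∑ m ∈ univ.filter (fun m => κ m = j), w m -
        (Fintype.card β : ℝ)⁻¹ * ∑ m, w m| ≤
      Fintype.card (ι → β) * √((∑ m, w m ^ 2) / Fintype.card β) := by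
  have hβ : (0 : ℝ) < Fintype.card β := by exact_mod_cast Fintype.card_pos
  set φ : β → ℝ := fun b => (if b = j then 1 else 0) - (Fintype.card β : ℝ)⁻¹
  have hφ : ∑ b, φ b = 0 := by simp [φ, sum_sub_distrib]
  have hφsq : ∑ b, φ b ^ 2 ≤ 1 := by
    have : ∑ b, φ b ^ 2 = φ j := by
      simp only [sq, φ, mul_sub, sum_sub_distrib, mul_ite, mul_one, mul_zero, sum_ite_eq',
        mem_univ, if_true, ← sum_mul, hφ, zero_mul, sub_zero]
    rw [this]
    simp [φ]
  have hD : ∀ κ : ι → β, ∑ m ∈ univ.filter (fun m => κ m = j), w m -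
      (Fintype.card β : ℝ)⁻¹ * ∑ m, w m = ∑ m, w m * φ (κ m) := by
    intro κ
    simp [φ, mul_sub, sum_sub_distrib, sum_filter, sum_mul, mul_comm]
  have hmoment := card_mul_sum_sq_sum_mul_apply hφ w
  set N : ℝ := (Fintype.card (ι → β) : ℝ)
  have hsq : (∑ κ : ι → β, |∑ m, w m * φ (κ m)|) ^ 2 ≤
      N ^ 2 * ((∑ m, w m ^ 2) / Fintype.card β) := by
    calc (∑ κ : ι → β, |∑ m, w m * φ (κ m)|) ^ 2
        ≤ N * ∑ κ : ι → β, (∑ m, w m * φ (κ m)) ^ 2 :=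
          sq_sum_le_card_mul_sum_sq.trans_eq (by simp [N, sq_abs])
      _ = N * (Fintype.card β * ∑ κ : ι → β, (∑ m, w m * φ (κ m)) ^ 2) / Fintype.card β := by
          field_simp
      _ = N ^ 2 * ((∑ m, w m ^ 2) / Fintype.card β) * ∑ b, φ b ^ 2 := by
          rw [hmoment]
          ring
      _ ≤ N ^ 2 * ((∑ m, w m ^ 2) / Fintype.card β) :=
          mul_le_of_le_one_right (by positivity) hφsq
  simp only [hD]
  rw [← Real.sqrt_sq (by positivity : (0 : ℝ) ≤ N), ← Real.sqrt_mul (sq_nonneg _)]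
  exact Real.le_sqrt_of_sq_le hsq

theorem exists_leakage_bin_le [Fintype Z] [Nonempty β] (g : ι → Z → ℝ) :
    ∃ κ : ι → β, leakage (bin κ g) ≤ (1 / 2) * ∑ z, √(Fintype.card β * ∑ m, g m z ^ 2) := by
  have hβ : (0 : ℝ) < Fintype.card β := by exact_mod_cast Fintype.card_pos
  set B := (1 / 2) * ∑ z, √(Fintype.card β * ∑ m, g m z ^ 2)
  suffices h : ∑ κ : ι → β, leakage (bin κ g) ≤ ∑ _κ : ι → β, B by
    obtain ⟨κ, -, hκ⟩ := exists_le_of_sum_le univ_nonempty h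
    exact ⟨κ, hκ⟩
  have hscale : ∀ z, Fintype.card β * √((∑ m, g m z ^ 2) / Fintype.card β) =
      √(Fintype.card β * ∑ m, g m z ^ 2) := fun z => by
    rw [Real.sqrt_div' _ hβ.le, Real.sqrt_mul hβ.le, mul_div_left_comm, Real.div_sqrt, mul_comm]
  calc ∑ κ : ι → β, leakage (bin κ g)
      = (1 / 2) * ∑ z, ∑ j, ∑ κ : ι → β, |∑ m ∈ univ.filter (fun m => κ m = j), g m z -
          (Fintype.card β : ℝ)⁻¹ * ∑ m, g m z| := by
        simp only [leakage_eq, sum_bin, ← mul_sum]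
        rw [sum_comm, sum_congr rfl fun _ _ => sum_comm, sum_comm]
        rfl
    _ ≤ (1 / 2) * ∑ z, ∑ _j : β, Fintype.card (ι → β) * √((∑ m, g m z ^ 2) / Fintype.card β) := by
        gcongr with z _ j _
        exact sum_abs_sum_fiber_sub_le (g · z) j
    _ = Fintype.card (ι → β) * B := by
        simp only [B, sum_const, card_univ, nsmul_eq_mul, ← hscale, mul_left_comm _ (_ : ℝ),
          mul_sum (univ : Finset Z)]
    _ = ∑ _κ : ι → β, B := by simp

end RandomBinning

section Smoothing

variable {ι β Z : Type*} [Fintype ι] [Fintype Z]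

theorem sum_sqrt_sum_sq_le {K : ℝ} (hK : 0 ≤ K) {g : ι → Z → ℝ} {c : Z → ℝ}
    (hc : ∀ z, 0 ≤ c z) (hg : ∀ m z, 0 ≤ g m z) (hgc : ∀ m z, g m z ≤ c z) :
    ∑ z, √(K * ∑ m, g m z ^ 2) ≤ √(K * ∑ z, c z) * √(∑ z, ∑ m, g m z) := by
  calc ∑ z, √(K * ∑ m, g m z ^ 2) ≤ ∑ z, √(K * c z) * √(∑ m, g m z) := by
        refine sum_le_sum fun z _ => ?_
        rw [← Real.sqrt_mul (mul_nonneg hK (hc z)), mul_assoc]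
        refine Real.sqrt_le_sqrt (mul_le_mul_of_nonneg_left ?_ hK)
        rw [mul_sum]
        exact sum_le_sum fun m _ => by
          rw [sq]
          exact mul_le_mul_of_nonneg_right (hgc m z) (hg m z)
    _ ≤ √(∑ z, K * c z) * √(∑ z, ∑ m, g m z) :=
        Real.sum_sqrt_mul_sqrt_le _ (fun z => mul_nonneg hK (hc z))
          fun z => sum_nonneg fun m _ => hg m z
    _ = √(K * ∑ z, c z) * √(∑ z, ∑ m, g m z) := by rw [mul_sum]

variable [Fintype β]

theorem exists_leakage_bin_le_of_le [Nonempty β] {a p : ι → Z → ℝ}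
    (ha : ∀ m z, 0 ≤ a m z) (hap : ∀ m z, a m z ≤ p m z) :
    ∃ κ : ι → β, leakage (bin κ a) ≤ leakage p + (1 / 2) *
      (√(Fintype.card β / Fintype.card ι * ∑ m, ∑ z, p m z) * √(∑ m, ∑ z, a m z)) := by
  set c : Z → ℝ := fun z => (Fintype.card ι : ℝ)⁻¹ * ∑ m, p m z
  have hc : ∀ z, 0 ≤ c z := fun z =>
    mul_nonneg (by positivity) (sum_nonneg fun m _ => (ha m z).trans (hap m z))
  set g : ι → Z → ℝ := fun m z => a m z ⊓ c z
  set r : ι → Z → ℝ := fun m z => (a m z - c z)⁺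
  have hgr : a = g + r := by
    ext m z
    simp [g, r, inf_eq_sub_posPart_sub]
  obtain ⟨κ, hκ⟩ := exists_leakage_bin_le (β := β) g
  refine ⟨κ, ?_⟩
  have hr : leakage (bin κ r) ≤ leakage p := by
    refine (leakage_bin_le_sum κ fun m z => posPart_nonneg _).trans ?_
    rw [leakage_eq_sum_posPart]
    gcongr with m _ z _
    exact posPart_mono (sub_le_sub_right (hap m z) _)
  have hg : ∑ z, √(Fintype.card β * ∑ m, g m z ^ 2) ≤
      √(Fintype.card β / Fintype.card ι * ∑ m, ∑ z, p m z) * √(∑ m, ∑ z, a m z) := by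
    have hcsum : (Fintype.card β : ℝ) * ∑ z, c z =
        Fintype.card β / Fintype.card ι * ∑ m, ∑ z, p m z := by
      rw [← mul_sum, sum_comm, div_eq_mul_inv, mul_assoc]
    refine (sum_sqrt_sum_sq_le (by positivity) hc (fun m z => le_inf (ha m z) (hc z))
      fun m z => inf_le_right).trans ?_
    rw [hcsum]
    gcongr
    rw [sum_comm]
    gcongr with m _ z _
    exact min_le_left _ _
  calc leakage (bin κ a) = leakage (bin κ g + bin κ r) := by rw [hgr, bin_add]
    _ ≤ leakage (bin κ g) + leakage (bin κ r) := leakage_add_le _ _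
    _ ≤ _ := by linarith

end Smoothing

section Codes

variable {ι X Z : Type*} [Fintype ι] [Fintype X]

theorem exists_mul_eq_of_sum_eq_one {T : ι → X → ℝ} (hT0 : ∀ m x, 0 ≤ T m x)
    (hT1 : ∑ m, ∑ x, T m x = 1) :
    ∃ (PW : ι → ℝ) (enc : ι → X → ℝ), (∀ m, 0 ≤ PW m) ∧ ∑ m, PW m = 1 ∧
      (∀ m x, 0 ≤ enc m x) ∧ (∀ m, ∑ x, enc m x = 1) ∧ ∀ m x, PW m * enc m x = T m x := by
  obtain ⟨x₀⟩ : Nonempty X := by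
    by_contra h
    simp [not_nonempty_iff.1 h] at hT1
  set PW : ι → ℝ := fun m => ∑ x, T m x
  refine ⟨PW, fun m x => if PW m = 0 then if x = x₀ then 1 else 0 else T m x / PW m,
    fun m => sum_nonneg fun x _ => hT0 m x, hT1, fun m x => ?_, fun m => ?_, fun m x => ?_⟩
  all_goals by_cases h : PW m = 0 <;> simp only [h, if_true, if_false]
  · positivity
  · exact div_nonneg (hT0 m x) (sum_nonneg fun x _ => hT0 m x)
  · simp
  · rw [← sum_div, div_self h]
  · rw [zero_mul, eq_comm]
    exact (sum_eq_zero_iff_of_nonneg fun x _ => hT0 m x).1 h x (mem_univ x)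
  · exact mul_div_cancel₀ _ h

theorem sum_sum_ite_eq_one_sub [DecidableEq ι] {PW : ι → ℝ} {enc : ι → X → ℝ} (hPW : ∑ m, PW m = 1)
    (henc : ∀ m, ∑ x, enc m x = 1) (d : X → ι) :
    ∑ m, ∑ x, (if d x = m then PW m * enc m x else 0) =
      1 - ∑ m, PW m * ∑ x ∈ univ.filter (fun x => d x ≠ m), enc m x := by
  rw [← hPW, ← sum_sub_distrib]
  refine sum_congr rfl fun m _ => ?_
  rw [← sum_filter, ← mul_sum, eq_sub_iff_add_eq, ← mul_add,
    sum_filter_add_sum_filter_not, henc, mul_one]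

theorem exists_code_of_joint [DecidableEq ι] [Fintype Z] (W : X → Z → ℝ) (d : X → ι)
    {T : ι → X → ℝ} (hT0 : ∀ m x, 0 ≤ T m x) (hT1 : ∑ m, ∑ x, T m x = 1)
    (hd : ∀ m x, d x ≠ m → T m x = 0) :
    ∃ (PW : ι → ℝ) (enc : ι → X → ℝ), (∀ m, 0 ≤ PW m) ∧ ∑ m, PW m = 1 ∧
      (∀ m x, 0 ≤ enc m x) ∧ (∀ m, ∑ x, enc m x = 1) ∧
      ∑ m, PW m * ∑ x ∈ univ.filter (fun x => d x ≠ m), enc m x = 0 ∧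
      tv (fun q : ι × Z => PW q.1 * ∑ x, enc q.1 x * W x q.2)
          (fun q => (Fintype.card ι : ℝ)⁻¹ * ∑ m, PW m * ∑ x, enc m x * W x q.2) =
        leakage (channelJoint W T) := by
  obtain ⟨PW, enc, hPW0, hPW1, henc0, henc1, hT⟩ := exists_mul_eq_of_sum_eq_one hT0 hT1
  refine ⟨PW, enc, hPW0, hPW1, henc0, henc1, sum_eq_zero fun m _ => ?_, ?_⟩
  · rw [mul_sum]
    exact sum_eq_zero fun x hx => (hT m x).trans (hd m x (mem_filter.1 hx).2)
  · simp only [tv_code_eq_leakage, hT]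

end Codes

theorem inv_one_sub_mul_add_le {δ x e ε : ℝ} (hδ : 0 ≤ δ) (hx : 0 ≤ x) (he : e ≤ ε) (hε : ε < 1) :
    (1 - e)⁻¹ * (δ + 1 / 2 * (√x * √(1 - e))) ≤ δ / (1 - ε) + 1 / 2 * √(x / (1 - ε)) := by
  have hε' : 0 < 1 - ε := by linarith
  have he' : 0 < 1 - e := by linarith
  calc (1 - e)⁻¹ * (δ + 1 / 2 * (√x * √(1 - e))) = δ / (1 - e) + 1 / 2 * √(x / (1 - e)) := by
        have hs : √(1 - e) ^ 2 = 1 - e := Real.sq_sqrt he'.le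
        have hs0 : √(1 - e) ≠ 0 := by positivity
        rw [Real.sqrt_div' _ he'.le]
        field_simp
        linear_combination √x * hs
    _ ≤ δ / (1 - ε) + 1 / 2 * √(x / (1 - ε)) := by
        gcongr

end Wiretap

open Wiretap

theorem trade_secrecy_for_reliability_general
    {X Y Z : Type*} [Fintype X] [Fintype Y] [Fintype Z]
    (f : X → Y)
    (PZX : X → Z → ℝ)
    (hpos : ∀ x z, 0 ≤ PZX x z) (hsum : ∀ x, ∑ z, PZX x z = 1)
    (M : ℕ)
    (ε δ : ℝ) (hε : ε < 1)
    (hcode : ∃ (PW : Fin M → ℝ) (enc : Fin M → X → ℝ) (dec : Y → Fin M),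
      (∀ m, 0 ≤ PW m) ∧ (∑ m, PW m = 1) ∧
      (∀ m x, 0 ≤ enc m x) ∧ (∀ m, ∑ x, enc m x = 1) ∧
      (∑ m : Fin M, PW m *
          ∑ x ∈ univ.filter (fun x => dec (f x) ≠ m), enc m x ≤ ε) ∧
      tv (fun q : Fin M × Z => PW q.1 * ∑ x, enc q.1 x * PZX x q.2)
         (fun q : Fin M × Z => (M : ℝ)⁻¹ *
            ∑ m : Fin M, PW m * ∑ x, enc m x * PZX x q.2) ≤ δ)
    (M' : ℕ) (hM' : 0 < M') :
    ∃ (PW : Fin M' → ℝ) (enc : Fin M' → X → ℝ) (dec : Y → Fin M'),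
      (∀ m, 0 ≤ PW m) ∧ (∑ m, PW m = 1) ∧
      (∀ m x, 0 ≤ enc m x) ∧ (∀ m, ∑ x, enc m x = 1) ∧
      -- zero error probability
      (∑ m : Fin M', PW m *
          ∑ x ∈ univ.filter (fun x => dec (f x) ≠ m), enc m x = 0) ∧
      -- secrecy leakage at most δ′
      tv (fun q : Fin M' × Z => PW q.1 * ∑ x, enc q.1 x * PZX x q.2)
         (fun q : Fin M' × Z => (M' : ℝ)⁻¹ *
            ∑ m : Fin M', PW m * ∑ x, enc m x * PZX x q.2)
        ≤ δ / (1 - ε) + (1 / 2) * Real.sqrt ((M' : ℝ) / ((M : ℝ) * (1 - ε))) := by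
  obtain ⟨PW, enc, dec, hPW0, hPW1, henc0, henc1, herr, hsec⟩ := hcode
  set e := ∑ m : Fin M, PW m * ∑ x ∈ univ.filter (fun x => dec (f x) ≠ m), enc m x
  set T : Fin M → X → ℝ := fun m x => PW m * enc m x
  set s : Fin M → X → ℝ := fun m x => if dec (f x) = m then T m x else 0
  have hT0 : ∀ m x, 0 ≤ T m x := fun m x => mul_nonneg (hPW0 m) (henc0 m x)
  have hT1 : ∑ m, ∑ x, T m x = 1 := by simp only [T, ← mul_sum, henc1, mul_one, hPW1]
  have hs0 : ∀ m x, 0 ≤ s m x := fun m x => by dsimp only [s]; split_ifs <;> simp [hT0]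
  have hsT : ∀ m x, s m x ≤ T m x := fun m x => by dsimp only [s]; split_ifs <;> simp [hT0]
  have hs1 : ∑ m, ∑ x, s m x = 1 - e := sum_sum_ite_eq_one_sub hPW1 henc1 _
  have he : 0 < 1 - e := by linarith
  have hleak : leakage (channelJoint PZX T) ≤ δ := by
    rwa [← tv_code_eq_leakage, Fintype.card_fin]
  have : Nonempty (Fin M') := ⟨⟨0, hM'⟩⟩
  obtain ⟨κ, hκ⟩ := exists_leakage_bin_le_of_le (β := Fin M')
    (channelJoint_nonneg hpos hs0) (channelJoint_mono hpos hsT)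
  rw [sum_channelJoint hsum, sum_channelJoint hsum, hT1, hs1, mul_one, Fintype.card_fin,
    Fintype.card_fin] at hκ
  obtain ⟨PW', enc', hPW'0, hPW'1, henc'0, henc'1, herr', hleak'⟩ :=
    exists_code_of_joint PZX (fun x => κ (dec (f x))) (T := fun j x => (1 - e)⁻¹ * bin κ s j x)
      (fun j x => mul_nonneg (inv_nonneg.2 he.le) (bin_nonneg κ hs0 j x))
      (by simp only [← mul_sum, sum_sum_bin, hs1, inv_mul_cancel₀ he.ne'])
      (fun j x hj => by rw [bin_eq_zero (P := s) (fun m x h => if_neg h) hj, mul_zero])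
  rw [Fintype.card_fin, channelJoint_const_mul, leakage_const_mul (inv_nonneg.2 he.le),
    channelJoint_bin] at hleak'
  refine ⟨PW', enc', fun y => κ (dec y), hPW'0, hPW'1, henc'0, henc'1, herr', hleak'.trans_le ?_⟩
  calc (1 - e)⁻¹ * leakage (bin κ (channelJoint PZX s))
      ≤ (1 - e)⁻¹ * (δ + 1 / 2 * (√(M' / M) * √(1 - e))) := by
        gcongr
        exact hκ.trans (add_le_add_left hleak _)
    _ ≤ δ / (1 - ε) + 1 / 2 * √(M' / (M * (1 - ε))) := by
        rw [← div_div]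
        exact inv_one_sub_mul_add_le ((tv_nonneg _ _).trans hsec) (by positivity) herr hε

/-- trading secrecy for reliability, semi-deterministic wiretap
channels: for the channel `P_{YZ|X}(y,z|x) = 1{y = f(x)}·P_{Z|X}(z|x)` with `f`
surjective, if an `(M, ε, δ)_avg` secrecy code exists with `ε < 1`, then for every
positive integer `M′` there exists an `(M′, 0, δ′)_avg` secrecy code with
`δ′ = δ/(1−ε) + (1/2)·√(M′/(M·(1−ε)))`. -/
theorem trade_secrecy_for_reliability
    {X Y Z : Type*} [Fintype X] [Fintype Y] [Fintype Z]
    (f : X → Y) (hf : Function.Surjective f)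
    (PZX : X → Z → ℝ)
    (hpos : ∀ x z, 0 ≤ PZX x z) (hsum : ∀ x, ∑ z, PZX x z = 1)
    (M : ℕ) (hM : 0 < M)
    (ε δ : ℝ) (hε : ε < 1)
    (hcode : ∃ (PW : Fin M → ℝ) (enc : Fin M → X → ℝ) (dec : Y → Fin M),
      (∀ m, 0 ≤ PW m) ∧ (∑ m, PW m = 1) ∧
      (∀ m x, 0 ≤ enc m x) ∧ (∀ m, ∑ x, enc m x = 1) ∧
      (∑ m : Fin M, PW m *
          ∑ x ∈ univ.filter (fun x => dec (f x) ≠ m), enc m x ≤ ε) ∧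
      tv (fun q : Fin M × Z => PW q.1 * ∑ x, enc q.1 x * PZX x q.2)
         (fun q : Fin M × Z => (M : ℝ)⁻¹ *
            ∑ m : Fin M, PW m * ∑ x, enc m x * PZX x q.2) ≤ δ)
    (M' : ℕ) (hM' : 0 < M') :
    ∃ (PW : Fin M' → ℝ) (enc : Fin M' → X → ℝ) (dec : Y → Fin M'),
      (∀ m, 0 ≤ PW m) ∧ (∑ m, PW m = 1) ∧
      (∀ m x, 0 ≤ enc m x) ∧ (∀ m, ∑ x, enc m x = 1) ∧
      -- zero error probability
      (∑ m : Fin M', PW m *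
          ∑ x ∈ univ.filter (fun x => dec (f x) ≠ m), enc m x = 0) ∧
      -- secrecy leakage at most δ′
      tv (fun q : Fin M' × Z => PW q.1 * ∑ x, enc q.1 x * PZX x q.2)
         (fun q : Fin M' × Z => (M' : ℝ)⁻¹ *
            ∑ m : Fin M', PW m * ∑ x, enc m x * PZX x q.2)
        ≤ δ / (1 - ε) + (1 / 2) * Real.sqrt ((M' : ℝ) / ((M : ℝ) * (1 - ε))) :=
  trade_secrecy_for_reliability_general f PZX hpos hsum M ε δ hε hcode M' hM'
end
end

section
/- Consider the binary symmetric wiretap channel with blocklength n and crossover probability p ∈ (0, 1/2): X = Y = Z = 𝔽₂ⁿ, the legitimate channel is noiseless (P_{Yⁿ|Xⁿ}(yⁿ|xⁿ) = 1{yⁿ = xⁿ}), and the eavesdropper's channel is the n-fold binary symmetric channel P_{Zⁿ|Xⁿ}(zⁿ|xⁿ) = p^{w}·(1−p)^{n−w} with w the Hamming distance between zⁿ and xⁿ. Then every (n, M, ε, δ)_avg secrecy code with ε < 1 satisfies g_n( 2ⁿ / (M·(1−ε)) ) ≤ δ/(1−ε). -/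
/-!
Restricting `P_{WZⁿ}` to the event that the noiseless legitimate receiver decodes correctly can
only decrease its total variation distance to `Q^unif × P_{Zⁿ}`, and since `(a - c)⁺` is
superadditive in `a ≥ 0`, the restricted distance splits over codewords `x`. The eavesdropper sees
`z = x + u` with BSC noise `u`; shifting `z` by the codeword and using convexity of `(·)⁺` in `x`
bounds the distance below by `∑ u, (S q(u) - 1/M)⁺`, where `q` is the noise distribution and
`S ≥ 1 - ε` the probability of correct decoding. Grouped by Hamming weight,
`∑ u, (q(u) - t)⁺ = g_n(2ⁿ t)`; take `t = 1/(M(1-ε))`.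
-/

open Finset
open scoped Classical

noncomputable section

section PosPart

variable {α : Type*}

lemma posPart_sub_add_posPart_sub_le {a b c : ℝ} (ha : 0 ≤ a) (hb : 0 ≤ b) (hc : 0 ≤ c) :
    (a - c)⁺ + (b - c)⁺ ≤ (a + b - c)⁺ := by
  rcases le_total a c with hac | hac
  · rw [posPart_eq_zero.2 (sub_nonpos.2 hac), zero_add]
    exact posPart_mono (by linarith)
  rcases le_total b c with hbc | hbc
  · rw [posPart_eq_zero.2 (sub_nonpos.2 hbc), add_zero]
    exact posPart_mono (by linarith)
  rw [posPart_eq_self.2 (sub_nonneg.2 hac), posPart_eq_self.2 (sub_nonneg.2 hbc)]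
  exact (by linarith : a - c + (b - c) ≤ a + b - c).trans (le_posPart _)

lemma sum_posPart_sub_le_posPart_sum_sub {s : Finset α} {a : α → ℝ} {c : ℝ}
    (ha : ∀ i ∈ s, 0 ≤ a i) (hc : 0 ≤ c) :
    ∑ i ∈ s, (a i - c)⁺ ≤ (∑ i ∈ s, a i - c)⁺ := by
  induction s using Finset.cons_induction with
  | empty => simp [hc]
  | cons j s hj ih =>
    rw [forall_mem_cons] at ha
    rw [sum_cons, sum_cons]
    calc (a j - c)⁺ + ∑ i ∈ s, (a i - c)⁺ ≤ (a j - c)⁺ + (∑ i ∈ s, a i - c)⁺ :=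
          add_le_add le_rfl (ih ha.2)
      _ ≤ (a j + ∑ i ∈ s, a i - c)⁺ :=
          posPart_sub_add_posPart_sub_le ha.1 (sum_nonneg ha.2) hc

lemma posPart_sum_sub_sum_le (s : Finset α) (a b : α → ℝ) :
    (∑ i ∈ s, a i - ∑ i ∈ s, b i)⁺ ≤ ∑ i ∈ s, (a i - b i)⁺ :=
  sup_le (by rw [← sum_sub_distrib]; exact sum_le_sum fun i _ => le_posPart _)
    (sum_nonneg fun i _ => posPart_nonneg _)

lemma tv_eq_sum_posPart_sub {A : Type*} [Fintype A] {P Q : A → ℝ}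
    (h : ∑ a, P a = ∑ a, Q a) : tv P Q = ∑ a, (P a - Q a)⁺ := by
  have habs : ∀ a, |P a - Q a| = 2 * (P a - Q a)⁺ - (P a - Q a) := fun a => by
    linarith [two_nsmul (P a - Q a)⁺ ▸ abs_add_eq_two_nsmul_posPart (P a - Q a)]
  rw [tv, sum_congr rfl fun a _ => habs a, sum_sub_distrib, sum_sub_distrib, h, ← mul_sum]
  ring

lemma sum_posPart_sub_le_tv {A : Type*} [Fintype A] {μ P Q : A → ℝ} (hμ : ∀ a, μ a ≤ P a)
    (h : ∑ a, P a = ∑ a, Q a) : ∑ a, (μ a - Q a)⁺ ≤ tv P Q := by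
  rw [tv_eq_sum_posPart_sub h]
  exact sum_le_sum fun a _ => posPart_mono (sub_le_sub_right (hμ a) _)

end PosPart

section Code

variable {ι X : Type*} [Fintype ι] [DecidableEq ι] [Fintype X]
  (PW : ι → ℝ) (enc : ι → X → ℝ) (dec : X → ι)

def successProb : ℝ := ∑ x, PW (dec x) * enc (dec x) x

lemma successProb_eq_sum_fiber :
    successProb PW enc dec = ∑ m, PW m * ∑ x with dec x = m, enc m x := by
  rw [successProb, ← sum_fiberwise univ dec]
  refine sum_congr rfl fun m _ => ?_
  rw [mul_sum]
  exact sum_congr rfl fun x hx => by rw [(mem_filter.1 hx).2]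

variable {PW enc dec}

lemma one_sub_le_successProb {ε : ℝ} (hPW : ∑ m, PW m = 1) (henc : ∀ m, ∑ x, enc m x = 1)
    (herr : ∑ m, PW m * ∑ x with dec x ≠ m, enc m x ≤ ε) :
    1 - ε ≤ successProb PW enc dec := by
  have hsplit : successProb PW enc dec + ∑ m, PW m * ∑ x with dec x ≠ m, enc m x = 1 := by
    simp_rw [successProb_eq_sum_fiber, ← sum_add_distrib, ← mul_add,
      sum_filter_add_sum_filter_not, henc, mul_one, hPW]
  linarith

lemma sum_posPart_correctlyDecoded_sub_le_tv {Z : Type*} [Fintype Z] (W : X → Z → ℝ) (R : Z → ℝ)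
    (hPW0 : ∀ m, 0 ≤ PW m) (henc0 : ∀ m x, 0 ≤ enc m x) (hW0 : ∀ x z, 0 ≤ W x z)
    (hR0 : ∀ z, 0 ≤ R z)
    (hmass : ∑ mz : ι × Z, PW mz.1 * ∑ x, enc mz.1 x * W x mz.2 = ∑ mz : ι × Z, R mz.2) :
    ∑ z, ∑ x, (PW (dec x) * enc (dec x) x * W x z - R z)⁺ ≤
      tv (fun mz : ι × Z => PW mz.1 * ∑ x, enc mz.1 x * W x mz.2) (fun mz => R mz.2) := by
  have hterm0 : ∀ m x z, 0 ≤ PW m * enc m x * W x z := fun m x z =>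
    mul_nonneg (mul_nonneg (hPW0 m) (henc0 m x)) (hW0 x z)
  refine le_trans ?_ (sum_posPart_sub_le_tv
    (μ := fun mz => ∑ x with dec x = mz.1, PW mz.1 * enc mz.1 x * W x mz.2) ?_ hmass)
  · rw [Fintype.sum_prod_type]
    refine (sum_le_sum fun z _ => ?_).trans_eq sum_comm
    calc ∑ x, (PW (dec x) * enc (dec x) x * W x z - R z)⁺
        = ∑ m, ∑ x with dec x = m, (PW m * enc m x * W x z - R z)⁺ := by
          rw [← sum_fiberwise univ dec]
          exact sum_congr rfl fun m _ => sum_congr rfl fun x hx => by rw [(mem_filter.1 hx).2]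
      _ ≤ ∑ m, (∑ x with dec x = m, PW m * enc m x * W x z - R z)⁺ := sum_le_sum fun m _ =>
          sum_posPart_sub_le_posPart_sum_sub (fun x _ => hterm0 m x z) (hR0 z)
  · rintro ⟨m, z⟩
    simp only [mul_sum, ← mul_assoc]
    exact sum_le_sum_of_subset_of_nonneg (filter_subset _ _) fun x _ _ => hterm0 m x z

end Code

section AdditiveNoise

variable {ι G : Type*} [Fintype ι] [DecidableEq ι] [AddGroup G] [Fintype G]

lemma sum_posPart_sum_mul_sub_sum_le (ν q R : G → ℝ) :
    ∑ u, ((∑ x, ν x) * q u - ∑ z, R z)⁺ ≤ ∑ z, ∑ x, (ν x * q (-x + z) - R z)⁺ := by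
  have hshift : ∀ u, ∑ x, R (x + u) = ∑ z, R z := fun u => Equiv.sum_comp (Equiv.addRight u) R
  calc ∑ u, ((∑ x, ν x) * q u - ∑ z, R z)⁺
      = ∑ u, (∑ x, ν x * q u - ∑ x, R (x + u))⁺ := by simp_rw [sum_mul, hshift]
    _ ≤ ∑ u, ∑ x, (ν x * q u - R (x + u))⁺ := sum_le_sum fun u _ => posPart_sum_sub_sum_le _ _ _
    _ = ∑ x, ∑ u, (ν x * q (-x + (x + u)) - R (x + u))⁺ := by
        rw [sum_comm]; simp only [neg_add_cancel_left]
    _ = ∑ x, ∑ z, (ν x * q (-x + z) - R z)⁺ := sum_congr rfl fun x _ =>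
        Equiv.sum_comp (Equiv.addLeft x) fun z => (ν x * q (-x + z) - R z)⁺
    _ = ∑ z, ∑ x, (ν x * q (-x + z) - R z)⁺ := sum_comm

theorem sum_posPart_successProb_mul_sub_le_tv {PW : ι → ℝ} {enc : ι → G → ℝ} (dec : G → ι)
    {q : G → ℝ} (hPW0 : ∀ m, 0 ≤ PW m) (hPW : ∑ m, PW m = 1) (henc0 : ∀ m x, 0 ≤ enc m x)
    (henc : ∀ m, ∑ x, enc m x = 1) (hq0 : ∀ u, 0 ≤ q u) (hq : ∑ u, q u = 1) :
    ∑ u, (successProb PW enc dec * q u - (Fintype.card ι : ℝ)⁻¹)⁺ ≤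
      tv (fun mz : ι × G => PW mz.1 * ∑ x, enc mz.1 x * q (-x + mz.2))
        (fun mz => (Fintype.card ι : ℝ)⁻¹ * ∑ m, PW m * ∑ x, enc m x * q (-x + mz.2)) := by
  set R : G → ℝ := fun z => (Fintype.card ι : ℝ)⁻¹ * ∑ m, PW m * ∑ x, enc m x * q (-x + z)
  have hnoise : ∀ x, ∑ z, q (-x + z) = 1 := fun x =>
    (Equiv.sum_comp (Equiv.addLeft (-x)) q).trans hq
  have hout : ∀ m, ∑ z, ∑ x, enc m x * q (-x + z) = 1 := fun m => by
    rw [sum_comm]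
    simp_rw [← mul_sum, hnoise, mul_one, henc]
  have hcard : (Fintype.card ι : ℝ) ≠ 0 := by
    obtain ⟨m, -, -⟩ := exists_ne_zero_of_sum_ne_zero (hPW ▸ one_ne_zero : ∑ m, PW m ≠ 0)
    exact Nat.cast_ne_zero.2 ((Fintype.card_pos_iff.2 ⟨m⟩).ne')
  have hR : ∑ z, R z = (Fintype.card ι : ℝ)⁻¹ := by
    simp_rw [R, ← mul_sum, sum_comm (γ := G), ← mul_sum, hout, mul_one, hPW, mul_one]
  have hmass :
      ∑ mz : ι × G, PW mz.1 * ∑ x, enc mz.1 x * q (-x + mz.2) = ∑ mz : ι × G, R mz.2 := by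
    simp_rw [Fintype.sum_prod_type, ← mul_sum, hout, mul_one, hPW, hR, sum_const, card_univ,
      nsmul_eq_mul, mul_inv_cancel₀ hcard]
  have hR0 : ∀ z, 0 ≤ R z := fun z => mul_nonneg (by positivity) (sum_nonneg fun m _ =>
    mul_nonneg (hPW0 m) (sum_nonneg fun x _ => mul_nonneg (henc0 m x) (hq0 _)))
  calc ∑ u, (successProb PW enc dec * q u - (Fintype.card ι : ℝ)⁻¹)⁺
      = ∑ u, ((∑ x, PW (dec x) * enc (dec x) x) * q u - ∑ z, R z)⁺ := by rw [hR, successProb]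
    _ ≤ ∑ z, ∑ x, (PW (dec x) * enc (dec x) x * q (-x + z) - R z)⁺ :=
        sum_posPart_sum_mul_sub_sum_le _ _ _
    _ ≤ _ := sum_posPart_correctlyDecoded_sub_le_tv (fun x z => q (-x + z)) R hPW0 henc0
        (fun _ _ => hq0 _) hR0 hmass

end AdditiveNoise

section BinarySymmetric

variable {ι : Type*} [Fintype ι] [DecidableEq ι]

def zmodTwoSupportEquiv : (ι → ZMod 2) ≃ Finset ι where
  toFun u := {i | u i ≠ 0}
  invFun s i := if i ∈ s then 1 else 0
  left_inv u := funext fun i => by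
    have h01 : ∀ a : ZMod 2, a ≠ 0 → a = 1 := by decide
    by_cases hi : u i = 0 <;> simp [hi, h01]
  right_inv s := by ext i; simp

lemma sum_comp_hammingNorm_zmod_two {R : Type*} [AddCommMonoid R] (f : ℕ → R) :
    ∑ u : ι → ZMod 2, f (hammingNorm u) = ∑ s : Finset ι, f #s :=
  Fintype.sum_equiv zmodTwoSupportEquiv _ _ fun _ => rfl

lemma sum_comp_hammingNorm_zmod_two_eq_sum_choose {R : Type*} [AddCommMonoid R] (f : ℕ → R) :
    ∑ u : ι → ZMod 2, f (hammingNorm u) =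
      ∑ w ∈ range (Fintype.card ι + 1), (Fintype.card ι).choose w • f w := by
  rw [sum_comp_hammingNorm_zmod_two, ← powerset_univ, sum_powerset_apply_card, card_univ]

lemma sum_bsc_noise_eq_one (p : ℝ) :
    ∑ u : ι → ZMod 2, p ^ hammingNorm u * (1 - p) ^ (Fintype.card ι - hammingNorm u) = 1 := by
  rw [sum_comp_hammingNorm_zmod_two (fun w => p ^ w * (1 - p) ^ (Fintype.card ι - w)),
    Fintype.sum_pow_mul_eq_add_pow, add_sub_cancel, one_pow]

end BinarySymmetric

lemma mul_one_sub_exp_neg_max_log_sub_log {a t : ℝ} (ha : 0 < a) (ht : 0 < t) :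
    a * (1 - Real.exp (-max 0 (Real.log a - Real.log t))) = (a - t)⁺ := by
  rcases le_total a t with hat | hat
  · rw [max_eq_left (sub_nonpos.2 (Real.log_le_log ha hat)), neg_zero, Real.exp_zero,
      posPart_eq_zero.2 (sub_nonpos.2 hat)]
    ring
  · rw [max_eq_right (sub_nonneg.2 (Real.log_le_log ht hat)), neg_sub, Real.exp_sub,
      Real.exp_log ht, Real.exp_log ha, posPart_eq_self.2 (sub_nonneg.2 hat)]
    field_simp

lemma bsc_gn_eq_sum_posPart (n : ℕ) {p t : ℝ} (hp0 : 0 < p) (hp1 : p < 1) (ht : 0 < t) :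
    1 - ∑ w ∈ range (n + 1), (n.choose w : ℝ) * p ^ w * (1 - p) ^ (n - w) *
        Real.exp (-(max 0 ((w : ℝ) * Real.log (p / (1 - p)) + (n : ℝ) * Real.log (1 - p) -
          Real.log t))) =
      ∑ u : Fin n → ZMod 2, (p ^ hammingNorm u * (1 - p) ^ (n - hammingNorm u) - t)⁺ := by
  have hp1' : 0 < 1 - p := sub_pos.2 hp1
  have hlog : ∀ w ∈ range (n + 1), (w : ℝ) * Real.log (p / (1 - p)) + n * Real.log (1 - p) =
      Real.log (p ^ w * (1 - p) ^ (n - w)) := fun w hw => by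
    rw [Real.log_mul (by positivity) (by positivity), Real.log_pow, Real.log_pow,
      Real.log_div hp0.ne' hp1'.ne', Nat.cast_sub (Nat.lt_succ_iff.1 (mem_range.1 hw))]
    ring
  have hbinom : ∑ w ∈ range (n + 1), (n.choose w : ℝ) * (p ^ w * (1 - p) ^ (n - w)) = 1 := by
    have h := (add_pow p (1 - p) n).symm
    rw [add_sub_cancel, one_pow] at h
    exact (sum_congr rfl fun w _ => by ring).trans h
  calc _ = ∑ w ∈ range (n + 1), (n.choose w : ℝ) * (p ^ w * (1 - p) ^ (n - w)) -
        ∑ w ∈ range (n + 1), (n.choose w : ℝ) * p ^ w * (1 - p) ^ (n - w) *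
          Real.exp (-(max 0 ((w : ℝ) * Real.log (p / (1 - p)) + (n : ℝ) * Real.log (1 - p) -
            Real.log t))) := by rw [hbinom]
    _ = ∑ w ∈ range (n + 1), (n.choose w : ℝ) * (p ^ w * (1 - p) ^ (n - w) *
        (1 - Real.exp (-max 0 (Real.log (p ^ w * (1 - p) ^ (n - w)) - Real.log t)))) := by
        rw [← sum_sub_distrib]
        exact sum_congr rfl fun w hw => by rw [hlog w hw]; ring
    _ = ∑ w ∈ range (n + 1), n.choose w • (p ^ w * (1 - p) ^ (n - w) - t)⁺ :=
        sum_congr rfl fun w _ => by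
          rw [mul_one_sub_exp_neg_max_log_sub_log (by positivity) ht, nsmul_eq_mul]
    _ = _ := by
        have h := sum_comp_hammingNorm_zmod_two_eq_sum_choose (ι := Fin n)
          fun w => (p ^ w * (1 - p) ^ (n - w) - t)⁺
        simp only [Fintype.card_fin] at h
        exact h.symm

theorem bsc_wiretap_converse_general
    (n : ℕ)
    (p : ℝ) (hp0 : 0 < p) (hp : p < 1 / 2)
    (PZX : (Fin n → ZMod 2) → (Fin n → ZMod 2) → ℝ)
    (hPZX : ∀ x z, PZX x z =
      p ^ hammingDist z x * (1 - p) ^ (n - hammingDist z x))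
    (gn : ℝ → ℝ)
    (hgn : ∀ γ, gn γ = 1 - ∑ w ∈ Finset.range (n + 1),
        (n.choose w : ℝ) * p ^ w * (1 - p) ^ (n - w) *
          Real.exp (-(max 0 ((w : ℝ) * Real.log (p / (1 - p))
            + (n : ℝ) * Real.log (1 - p) - Real.log (γ / 2 ^ n)))))
    (M : ℕ) (hM : 0 < M)
    (PW : Fin M → ℝ) (hPWpos : ∀ m, 0 ≤ PW m) (hPWsum : ∑ m, PW m = 1)
    (enc : Fin M → (Fin n → ZMod 2) → ℝ)
    (hencpos : ∀ m x, 0 ≤ enc m x) (hencsum : ∀ m, ∑ x, enc m x = 1)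
    (dec : (Fin n → ZMod 2) → Fin M)
    (ε δ : ℝ) (hε : ε < 1)
    -- average error probability over the noiseless legitimate channel
    (herr : ∑ m : Fin M, PW m *
        ∑ x ∈ univ.filter (fun x => dec x ≠ m), enc m x ≤ ε)
    -- average secrecy constraint `d(P_{WZⁿ}, Q^unif × P_{Zⁿ}) ≤ δ`
    (hsec : tv (fun q : Fin M × (Fin n → ZMod 2) =>
          PW q.1 * ∑ x, enc q.1 x * PZX x q.2)
        (fun q : Fin M × (Fin n → ZMod 2) => (M : ℝ)⁻¹ *
          ∑ m : Fin M, PW m * ∑ x, enc m x * PZX x q.2) ≤ δ) :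
    gn ((2 : ℝ) ^ n / ((M : ℝ) * (1 - ε))) ≤ δ / (1 - ε) := by
  have hε1 : 0 < 1 - ε := sub_pos.2 hε
  have hp1 : 0 < 1 - p := by linarith
  set q : (Fin n → ZMod 2) → ℝ := fun u => p ^ hammingNorm u * (1 - p) ^ (n - hammingNorm u)
  obtain rfl : PZX = fun x z => q (-x + z) := by
    funext x z
    rw [hPZX, hammingDist_comm, hammingDist_eq_hammingNorm]
  have hq0 : ∀ u, 0 ≤ q u := fun u => by positivity
  have hq : ∑ u, q u = 1 := by simpa using sum_bsc_noise_eq_one (ι := Fin n) p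
  have hsuccess := one_sub_le_successProb hPWsum hencsum herr
  have hkey := sum_posPart_successProb_mul_sub_le_tv dec hPWpos hPWsum hencpos hencsum hq0 hq
  rw [Fintype.card_fin] at hkey
  have ht : 0 < ((M : ℝ) * (1 - ε))⁻¹ := inv_pos.2 (mul_pos (Nat.cast_pos.2 hM) hε1)
  rw [hgn, div_div_cancel_left' (by positivity), bsc_gn_eq_sum_posPart n hp0 (sub_pos.1 hp1) ht,
    le_div_iff₀ hε1]
  calc (∑ u, (q u - ((M : ℝ) * (1 - ε))⁻¹)⁺) * (1 - ε)
      = ∑ u, ((1 - ε) * q u - (M : ℝ)⁻¹)⁺ := by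
        rw [sum_mul]
        refine sum_congr rfl fun u _ => ?_
        rw [posPart_def, posPart_def, max_mul_of_nonneg _ _ hε1.le, zero_mul]
        field_simp
    _ ≤ ∑ u, (successProb PW enc dec * q u - (M : ℝ)⁻¹)⁺ :=
        sum_le_sum fun u _ =>
          posPart_mono (sub_le_sub_right (mul_le_mul_of_nonneg_right hsuccess (hq0 u)) _)
    _ ≤ δ := hkey.trans hsec

/-- converse for the binary symmetric wiretap channel: the
legitimate channel is noiseless on `𝔽₂ⁿ` and the eavesdropper's channel is the
`n`-fold BSC with crossover probability `p ∈ (0, 1/2)`.  Every `(n, M, ε, δ)_avg`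
secrecy code with `ε < 1` satisfies `g_n(2ⁿ/(M(1−ε))) ≤ δ/(1−ε)`. -/
theorem bsc_wiretap_converse
    (n : ℕ) (hn : 0 < n)
    (p : ℝ) (hp0 : 0 < p) (hp : p < 1 / 2)
    (PZX : (Fin n → ZMod 2) → (Fin n → ZMod 2) → ℝ)
    (hPZX : ∀ x z, PZX x z =
      p ^ hammingDist z x * (1 - p) ^ (n - hammingDist z x))
    (gn : ℝ → ℝ)
    (hgn : ∀ γ, gn γ = 1 - ∑ w ∈ Finset.range (n + 1),
        (n.choose w : ℝ) * p ^ w * (1 - p) ^ (n - w) *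
          Real.exp (-(max 0 ((w : ℝ) * Real.log (p / (1 - p))
            + (n : ℝ) * Real.log (1 - p) - Real.log (γ / 2 ^ n)))))
    (M : ℕ) (hM : 0 < M)
    (PW : Fin M → ℝ) (hPWpos : ∀ m, 0 ≤ PW m) (hPWsum : ∑ m, PW m = 1)
    (enc : Fin M → (Fin n → ZMod 2) → ℝ)
    (hencpos : ∀ m x, 0 ≤ enc m x) (hencsum : ∀ m, ∑ x, enc m x = 1)
    (dec : (Fin n → ZMod 2) → Fin M)
    (ε δ : ℝ) (hε : ε < 1)
    -- average error probability over the noiseless legitimate channel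
    (herr : ∑ m : Fin M, PW m *
        ∑ x ∈ univ.filter (fun x => dec x ≠ m), enc m x ≤ ε)
    -- average secrecy constraint `d(P_{WZⁿ}, Q^unif × P_{Zⁿ}) ≤ δ`
    (hsec : tv (fun q : Fin M × (Fin n → ZMod 2) =>
          PW q.1 * ∑ x, enc q.1 x * PZX x q.2)
        (fun q : Fin M × (Fin n → ZMod 2) => (M : ℝ)⁻¹ *
          ∑ m : Fin M, PW m * ∑ x, enc m x * PZX x q.2) ≤ δ) :
    gn ((2 : ℝ) ^ n / ((M : ℝ) * (1 - ε))) ≤ δ / (1 - ε) :=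
  bsc_wiretap_converse_general n p hp0 hp PZX hPZX gn hgn M hM PW hPWpos hPWsum enc hencpos hencsum
    dec ε δ hε herr hsec
end
end

section
/- Let P_{Zⁿ|Xⁿ} be the n-fold binary symmetric channel with crossover probability p ∈ (0, 1/2) on 𝔽₂ⁿ, i.e., P_{Zⁿ|Xⁿ}(zⁿ|xⁿ) = p^{w}·(1−p)^{n−w} with w the Hamming distance between zⁿ and xⁿ. Then for every γ > 0, every probability distribution P on 𝔽₂ⁿ, and every probability distribution Q on 𝔽₂ⁿ, E_γ( P·P_{Zⁿ|Xⁿ}, U × Q ) ≥ E_γ( U·P_{Zⁿ|Xⁿ}, U × U ), where U denotes the uniform distribution on 𝔽₂ⁿ, P·P_{Zⁿ|Xⁿ} denotes the joint distribution (xⁿ,zⁿ) ↦ P(xⁿ)·P_{Zⁿ|Xⁿ}(zⁿ|xⁿ), and U × Q the product distribution; moreover E_γ( U·P_{Zⁿ|Xⁿ}, U × U ) = g_n(γ). In other words, the minimum over (P, Q) of E_γ( P·P_{Zⁿ|Xⁿ}, U × Q ) is achieved when both P and Q are uniform and equals g_n(γ). -/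
open Finset

noncomputable section

/-- Hamming distance is shift-invariant. -/
lemma hammingDist_add_shift {n : ℕ} (z x a : Fin n → ZMod 2) :
    hammingDist (z + a) (x + a) = hammingDist z x := by
  unfold hammingDist
  congr 1
  apply Finset.filter_congr
  intro i _
  simp

/-- The number of points at Hamming distance `w` from a fixed point is `n.choose w`. -/
lemma card_hammingDist_eq {n : ℕ} (x : Fin n → ZMod 2) (w : ℕ) :
    ((univ : Finset (Fin n → ZMod 2)).filter fun z => hammingDist z x = w).card
      = n.choose w := by
  have h1 : n.choose w = ((univ : Finset (Fin n)).powersetCard w).card := by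
    rw [Finset.card_powersetCard, Finset.card_univ, Fintype.card_fin]
  rw [h1]
  apply Finset.card_bij (fun z _ => univ.filter fun i => z i ≠ x i)
  · intro z hz
    rw [Finset.mem_powersetCard]
    refine ⟨Finset.filter_subset _ _, ?_⟩
    simpa [hammingDist] using (Finset.mem_filter.mp hz).2
  · intro z₁ h₁ z₂ h₂ h
    funext i
    have := Finset.ext_iff.mp h i
    simp only [Finset.mem_filter, Finset.mem_univ, true_and] at this
    revert this
    generalize z₁ i = a; generalize z₂ i = b; generalize x i = c
    revert a b c; decide
  · intro s hs
    rw [Finset.mem_powersetCard] at hs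
    have hne : ∀ a : ZMod 2, a + 1 ≠ a := by decide
    refine ⟨fun i => if i ∈ s then x i + 1 else x i, ?_, ?_⟩
    · have hfil : (univ.filter fun i => (if i ∈ s then x i + 1 else x i) ≠ x i) = s := by
        ext i
        by_cases hi : i ∈ s <;> simp [hi, hne]
      simp only [Finset.mem_filter, Finset.mem_univ, true_and, hammingDist]
      rw [hfil]; exact hs.2
    · ext i
      by_cases hi : i ∈ s <;> simp [hi, hne]

/-- Grouping a sum over `𝔽₂ⁿ` by Hamming distance from `x`. -/
lemma sum_by_hammingDist {n : ℕ} (x : Fin n → ZMod 2) (f : ℕ → ℝ) :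
    ∑ z, f (hammingDist z x) = ∑ w ∈ Finset.range (n + 1), (n.choose w : ℝ) * f w := by
  have hmap : ∀ z ∈ (univ : Finset (Fin n → ZMod 2)),
      hammingDist z x ∈ Finset.range (n + 1) := by
    intro z _
    simp only [Finset.mem_range, Nat.lt_succ_iff]
    simpa using hammingDist_le_card_fintype (x := z) (y := x)
  rw [← Finset.sum_fiberwise_of_maps_to hmap (fun z => f (hammingDist z x))]
  apply Finset.sum_congr rfl
  intro w hw
  rw [Finset.sum_congr rfl (fun z hz => by
    rw [(Finset.mem_filter.mp hz).2]), Finset.sum_const, card_hammingDist_eq,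
    nsmul_eq_mul]

/-- Termwise identity relating the exponential form and the positive-part form. -/
lemma bsc_term_identity {n w : ℕ} (hw : w ≤ n) (p γ : ℝ)
    (hp0 : 0 < p) (hp : p < 1 / 2) (hγ : 0 < γ) :
    p ^ w * (1 - p) ^ (n - w)
      - p ^ w * (1 - p) ^ (n - w) *
        Real.exp (-(max 0 ((w : ℝ) * Real.log (p / (1 - p))
            + (n : ℝ) * Real.log (1 - p) - Real.log (γ / 2 ^ n))))
    = max (p ^ w * (1 - p) ^ (n - w) - γ * ((2 : ℝ) ^ n)⁻¹) 0 := by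
  have h1p : (0:ℝ) < 1 - p := by linarith
  set t : ℝ := p ^ w * (1 - p) ^ (n - w) with ht
  have htpos : 0 < t := by positivity
  set c : ℝ := γ / 2 ^ n with hc
  have hcpos : 0 < c := by positivity
  have hcc : c = γ * ((2:ℝ)^n)⁻¹ := by rw [hc, div_eq_mul_inv]
  have hL : (w : ℝ) * Real.log (p / (1 - p)) + (n : ℝ) * Real.log (1 - p) - Real.log c
      = Real.log t - Real.log c := by
    have : (w : ℝ) * Real.log (p / (1 - p)) + (n : ℝ) * Real.log (1 - p)
        = Real.log t := by
      rw [Real.log_div (ne_of_gt hp0) (ne_of_gt h1p), ht,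
        Real.log_mul (by positivity) (by positivity), Real.log_pow, Real.log_pow]
      have : ((n - w : ℕ) : ℝ) = (n : ℝ) - w := by
        rw [Nat.cast_sub hw]
      rw [this]; ring
    rw [this]
  rw [hL]
  rcases le_or_gt t c with h | h
  · have hle : Real.log t - Real.log c ≤ 0 := by
      have := Real.log_le_log htpos h
      linarith
    rw [max_eq_left hle, neg_zero, Real.exp_zero, mul_one, sub_self]
    have : t - γ * ((2:ℝ)^n)⁻¹ ≤ 0 := by rw [← hcc]; linarith
    rw [max_eq_right this]
  · have hge : 0 ≤ Real.log t - Real.log c := by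
      have := Real.log_le_log hcpos h.le
      linarith
    rw [max_eq_right hge, neg_sub, Real.exp_sub, Real.exp_log htpos, Real.exp_log hcpos]
    have h2 : t * (c / t) = c := by field_simp
    rw [h2, ← hcc, max_eq_left (by linarith)]

/-- extremality of the uniform distributions for the `n`-fold BSC:
for every `γ > 0` and probability distributions `P`, `Q` on `𝔽₂ⁿ`,
`E_γ(P·P_{Zⁿ|Xⁿ}, U × Q) ≥ E_γ(U·P_{Zⁿ|Xⁿ}, U × U)`, and moreover
`E_γ(U·P_{Zⁿ|Xⁿ}, U × U) = g_n(γ)`, where `U` is uniform on `𝔽₂ⁿ`. -/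
theorem bsc_egamma_uniform_optimal
    (n : ℕ) (hn : 0 < n)
    (p : ℝ) (hp0 : 0 < p) (hp : p < 1 / 2)
    (PZX : (Fin n → ZMod 2) → (Fin n → ZMod 2) → ℝ)
    (hPZX : ∀ x z, PZX x z =
      p ^ hammingDist z x * (1 - p) ^ (n - hammingDist z x))
    (gn : ℝ → ℝ)
    (hgn : ∀ γ, gn γ = 1 - ∑ w ∈ Finset.range (n + 1),
        (n.choose w : ℝ) * p ^ w * (1 - p) ^ (n - w) *
          Real.exp (-(max 0 ((w : ℝ) * Real.log (p / (1 - p))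
            + (n : ℝ) * Real.log (1 - p) - Real.log (γ / 2 ^ n)))))
    (γ : ℝ) (hγ : 0 < γ)
    (P Q : (Fin n → ZMod 2) → ℝ)
    (hPpos : ∀ x, 0 ≤ P x) (hPsum : ∑ x, P x = 1)
    (hQpos : ∀ z, 0 ≤ Q z) (hQsum : ∑ z, Q z = 1) :
    Egamma γ
        (fun q : (Fin n → ZMod 2) × (Fin n → ZMod 2) =>
          ((2 : ℝ) ^ n)⁻¹ * PZX q.1 q.2)
        (fun q : (Fin n → ZMod 2) × (Fin n → ZMod 2) =>
          ((2 : ℝ) ^ n)⁻¹ * ((2 : ℝ) ^ n)⁻¹)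
      ≤ Egamma γ
          (fun q : (Fin n → ZMod 2) × (Fin n → ZMod 2) => P q.1 * PZX q.1 q.2)
          (fun q : (Fin n → ZMod 2) × (Fin n → ZMod 2) =>
            ((2 : ℝ) ^ n)⁻¹ * Q q.2) ∧
    Egamma γ
        (fun q : (Fin n → ZMod 2) × (Fin n → ZMod 2) =>
          ((2 : ℝ) ^ n)⁻¹ * PZX q.1 q.2)
        (fun q : (Fin n → ZMod 2) × (Fin n → ZMod 2) =>
          ((2 : ℝ) ^ n)⁻¹ * ((2 : ℝ) ^ n)⁻¹)
      = gn γ := by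
  set u : ℝ := ((2 : ℝ) ^ n)⁻¹ with hu
  have h2n : (0:ℝ) < 2 ^ n := by positivity
  have hupos : 0 < u := by positivity
  have hcard : ((Fintype.card (Fin n → ZMod 2) : ℝ)) = 2 ^ n := by
    simp [Fintype.card_fun]
  have hu2 : u * (2:ℝ)^n = 1 := inv_mul_cancel₀ (ne_of_gt h2n)
  have hshift : ∀ x z a : (Fin n → ZMod 2), PZX (x + a) (z + a) = PZX x z := by
    intro x z a
    rw [hPZX, hPZX, hammingDist_add_shift]
  -- the common left-hand side, in closed form
  set E : ℝ := ∑ w ∈ Finset.range (n + 1),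
      (n.choose w : ℝ) * max (p ^ w * (1 - p) ^ (n - w) - γ * u) 0 with hE
  have hLHS : Egamma γ
      (fun q : (Fin n → ZMod 2) × (Fin n → ZMod 2) => u * PZX q.1 q.2)
      (fun q : (Fin n → ZMod 2) × (Fin n → ZMod 2) => u * u) = E := by
    unfold Egamma
    rw [Fintype.sum_prod_type]
    have hstep : ∀ x : (Fin n → ZMod 2), (∑ z : (Fin n → ZMod 2), max (u * PZX x z - γ * (u * u)) 0)
        = u * E := by
      intro x
      have h1 : ∀ z : (Fin n → ZMod 2), max (u * PZX x z - γ * (u * u)) 0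
          = u * max (PZX x z - γ * u) 0 := by
        intro z
        have e1 : u * PZX x z - γ * (u * u) = u * (PZX x z - γ * u) := by ring
        rw [e1, mul_max_of_nonneg _ _ hupos.le, mul_zero]
      rw [Finset.sum_congr rfl (fun z _ => h1 z), ← Finset.mul_sum]
      congr 1
      have h2 : ∀ z : (Fin n → ZMod 2), max (PZX x z - γ * u) 0
          = (fun w => max (p ^ w * (1 - p) ^ (n - w) - γ * u) 0) (hammingDist z x) := by
        intro z; rw [hPZX]
      rw [Finset.sum_congr rfl (fun z _ => h2 z),
        sum_by_hammingDist x (fun w => max (p ^ w * (1 - p) ^ (n - w) - γ * u) 0)]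
    rw [Finset.sum_congr rfl (fun x _ => hstep x), Finset.sum_const,
      Finset.card_univ, nsmul_eq_mul, hcard]
    rw [← mul_assoc, mul_comm ((2:ℝ)^n) u, hu2, one_mul]
  constructor
  · -- the inequality
    unfold Egamma
    set S : ℝ := ∑ q : (Fin n → ZMod 2) × (Fin n → ZMod 2), max (P q.1 * PZX q.1 q.2 - γ * (u * Q q.2)) 0 with hS
    -- shifted sums equal S
    have hshiftsum : ∀ a : (Fin n → ZMod 2),
        (∑ q : (Fin n → ZMod 2) × (Fin n → ZMod 2), max (P (q.1 + a) * PZX (q.1 + a) (q.2 + a)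
          - γ * (u * Q (q.2 + a))) 0) = S := by
      intro a
      exact Fintype.sum_equiv ((Equiv.addRight a).prodCongr (Equiv.addRight a))
        _ _ (fun q => rfl)
    -- pointwise: uniform term is the average of shifted terms
    have hpt : ∀ q : (Fin n → ZMod 2) × (Fin n → ZMod 2), u * PZX q.1 q.2 - γ * (u * u)
        = u * ∑ a : (Fin n → ZMod 2), (P (q.1 + a) * PZX (q.1 + a) (q.2 + a)
            - γ * (u * Q (q.2 + a))) := by
      intro q
      have e1 : ∀ a : (Fin n → ZMod 2), P (q.1 + a) * PZX (q.1 + a) (q.2 + a)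
          - γ * (u * Q (q.2 + a))
          = P (q.1 + a) * PZX q.1 q.2 - γ * u * Q (q.2 + a) := by
        intro a; rw [hshift]; ring
      rw [Finset.sum_congr rfl (fun a _ => e1 a), Finset.sum_sub_distrib,
        ← Finset.sum_mul, ← Finset.mul_sum]
      have hP1 : ∑ a : (Fin n → ZMod 2), P (q.1 + a) = 1 :=
        (Fintype.sum_equiv (Equiv.addLeft q.1) _ P (fun a => rfl)).trans hPsum
      have hQ1 : ∑ a : (Fin n → ZMod 2), Q (q.2 + a) = 1 :=
        (Fintype.sum_equiv (Equiv.addLeft q.2) _ Q (fun a => rfl)).trans hQsum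
      rw [hP1, hQ1, one_mul, mul_one]
      ring
    calc ∑ q : (Fin n → ZMod 2) × (Fin n → ZMod 2), max (u * PZX q.1 q.2 - γ * (u * u)) 0
        ≤ ∑ q : (Fin n → ZMod 2) × (Fin n → ZMod 2), u * ∑ a : (Fin n → ZMod 2), max (P (q.1 + a) * PZX (q.1 + a) (q.2 + a)
            - γ * (u * Q (q.2 + a))) 0 := by
          apply Finset.sum_le_sum
          intro q _
          rw [hpt q]
          have hsum_le : (∑ a : (Fin n → ZMod 2), (P (q.1 + a) * PZX (q.1 + a) (q.2 + a)
              - γ * (u * Q (q.2 + a))))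
              ≤ ∑ a : (Fin n → ZMod 2), max (P (q.1 + a) * PZX (q.1 + a) (q.2 + a)
              - γ * (u * Q (q.2 + a))) 0 :=
            Finset.sum_le_sum (fun a _ => le_max_left _ _)
          have hnn : (0:ℝ) ≤ ∑ a : (Fin n → ZMod 2), max (P (q.1 + a) * PZX (q.1 + a) (q.2 + a)
              - γ * (u * Q (q.2 + a))) 0 :=
            Finset.sum_nonneg (fun a _ => le_max_right _ _)
          apply max_le
          · exact mul_le_mul_of_nonneg_left hsum_le hupos.le |>.trans_eq rfl
          · positivity
      _ = u * ∑ a : (Fin n → ZMod 2), ∑ q : (Fin n → ZMod 2) × (Fin n → ZMod 2), max (P (q.1 + a) * PZX (q.1 + a) (q.2 + a)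
            - γ * (u * Q (q.2 + a))) 0 := by
          rw [← Finset.mul_sum, Finset.sum_comm]
      _ = u * ∑ a : (Fin n → ZMod 2), S := by
          rw [Finset.sum_congr rfl (fun a _ => hshiftsum a)]
      _ = S := by
          rw [Finset.sum_const, Finset.card_univ, nsmul_eq_mul, hcard,
            ← mul_assoc, hu2, one_mul]
  · -- the equality
    rw [hLHS, hgn γ, hE]
    have hbin : ∑ w ∈ Finset.range (n + 1),
        (n.choose w : ℝ) * p ^ w * (1 - p) ^ (n - w) = 1 := by
      have h := add_pow p (1 - p) n
      simp only [add_sub_cancel, one_pow] at h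
      conv_rhs => rw [h]
      apply Finset.sum_congr rfl
      intro w hw
      ring
    have hterm : ∀ w ∈ Finset.range (n + 1),
        (n.choose w : ℝ) * max (p ^ w * (1 - p) ^ (n - w) - γ * u) 0
        = (n.choose w : ℝ) * p ^ w * (1 - p) ^ (n - w)
          - (n.choose w : ℝ) * p ^ w * (1 - p) ^ (n - w) *
            Real.exp (-(max 0 ((w : ℝ) * Real.log (p / (1 - p))
              + (n : ℝ) * Real.log (1 - p) - Real.log (γ / 2 ^ n)))) := by
      intro w hw
      rw [Finset.mem_range, Nat.lt_succ_iff] at hw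
      rw [hu, ← bsc_term_identity hw p γ hp0 hp hγ]
      ring
    rw [Finset.sum_congr rfl hterm, Finset.sum_sub_distrib, hbin]
end
end
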